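/- arXiv:1508.07279 — 8 statements merged into one kernel-verified Lean document; each statement's English description precedes it below -/
import Mathlib

section
/- Let q be an odd prime power, K a finite field with q² elements, and f : K → K a normal planar function, i.e. f is planar, f(0) = 0, and for all a, b ∈ K one has f(a) = f(b) if and only if a = b or a = −b. Then for each c ∈ K the set O_c = {(x, c) : x ∈ K} ∪ {(∞)} is an oval in the shift plane Π(f): it has q²+1 points and every line of Π(f) meets it in at most 2 points; concretely, for all a, b ∈ K the number of x ∈ K with f(x+a) − b = c is at most 2. Moreover, for θ ∈ K \ {0} and F the subfield of order q, the point set U_θ = {(x, tθ) : x ∈ K, t ∈ F} ∪ {(∞)} is the union of the ovals O_{tθ} over t ∈ F. -/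
/-- The point set of the shift plane `Π(f)`: affine points `(x,y)`, points at
infinity `(a)` for `a ∈ K`, and the point `(∞)`. -/
abbrev ShiftPt (K : Type) : Type := (K × K) ⊕ (K ⊕ Unit)

/-- The affine line `L_{a,b} = {(x, f(x+a) − b) : x ∈ K} ∪ {(a)}` of the shift plane. -/
def affLine (K : Type) [Field K] (f : K → K) (a b : K) : Set (ShiftPt K) :=
  {P | (∃ x : K, P = Sum.inl (x, f (x + a) - b)) ∨ P = Sum.inr (Sum.inl a)}

/-- The vertical line `N_a = {(a,y) : y ∈ K} ∪ {(∞)}` of the shift plane. -/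
def vertLine (K : Type) [Field K] (a : K) : Set (ShiftPt K) :=
  {P | (∃ y : K, P = Sum.inl (a, y)) ∨ P = Sum.inr (Sum.inr ())}

/-- The line at infinity of the shift plane. -/
def lineAtInf (K : Type) : Set (ShiftPt K) :=
  {P | ∃ s : K ⊕ Unit, P = Sum.inr s}

/-- The set of all lines of the shift plane `Π(f)`. -/
def shiftLines (K : Type) [Field K] (f : K → K) : Set (Set (ShiftPt K)) :=
  {L | (∃ a b : K, L = affLine K f a b) ∨ (∃ a : K, L = vertLine K a) ∨ L = lineAtInf K}

/-- The set `θF = {tθ : t ∈ F}`, where `F = {t : t^q = t}` is the subfield of order `q`. -/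
def scalarSet (K : Type) [Field K] (q : ℕ) (θ : K) : Set K :=
  {c | ∃ t : K, t ^ q = t ∧ c = t * θ}

/-- The point set `U_θ = {(x, tθ) : x ∈ K, t ∈ F} ∪ {(∞)}`. -/
def unitalSet (K : Type) [Field K] (q : ℕ) (θ : K) : Set (ShiftPt K) :=
  {P | (∃ x t : K, t ^ q = t ∧ P = Sum.inl (x, t * θ)) ∨ P = Sum.inr (Sum.inr ())}

/-- The set `O_c = {(x,c) : x ∈ K} ∪ {(∞)}`. -/
def ovalSet (K : Type) (c : K) : Set (ShiftPt K) :=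
  {P | (∃ x : K, P = Sum.inl (x, c)) ∨ P = Sum.inr (Sum.inr ())}

/-- Proposition 3.1.  For a normal planar function `f` on `K = F_{q²}`
(planar with `f(0) = 0` and `f(a) = f(b) ↔ a = ±b`), each `O_c = {(x,c)} ∪ {(∞)}`
is an oval in `Π(f)`: it has `q²+1` points and every line meets it in at most `2`
points; concretely, for all `a b` the number of `x` with `f(x+a) − b = c` is at
most `2`.  Moreover `U_θ` is the union of the ovals `O_{tθ}` over `t ∈ F`. -/
theorem stmt10 (p n q : ℕ) (hp : Nat.Prime p) (hpodd : Odd p) (hn : 0 < n) (hq : q = p ^ n)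
    (K : Type) [Field K] [Fintype K] (hcard : Fintype.card K = q ^ 2)
    (f : K → K)
    (hplanar : ∀ a : K, a ≠ 0 → Function.Bijective (fun x : K => f (x + a) - f x))
    (hzero : f 0 = 0)
    (hnormal : ∀ a b : K, f a = f b ↔ (a = b ∨ a = -b)) :
    (∀ c : K,
      (ovalSet K c).ncard = q ^ 2 + 1 ∧
      (∀ L ∈ shiftLines K f, (L ∩ ovalSet K c).ncard ≤ 2) ∧
      (∀ a b : K, {x : K | f (x + a) - b = c}.ncard ≤ 2)) ∧
    (∀ θ : K, θ ≠ 0 →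
      unitalSet K q θ = ⋃ t ∈ {t : K | t ^ q = t}, ovalSet K (t * θ)) := by
  constructor
  · intro c
    have hsol : ∀ a b : K, {x : K | f (x + a) - b = c}.ncard ≤ 2 := by
      intro a b
      rcases Set.eq_empty_or_nonempty {x : K | f (x + a) - b = c} with h | ⟨x0, hx0⟩
      · simp [h]
      · simp only [Set.mem_setOf_eq] at hx0
        have hsub : {x : K | f (x + a) - b = c} ⊆ {x0, -x0 - 2*a} := by
          intro x hx
          simp only [Set.mem_setOf_eq] at hx
          have heq : f (x + a) = f (x0 + a) := by linear_combination hx - hx0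
          rcases (hnormal _ _).mp heq with h1 | h1
          · left; show x = x0; exact add_right_cancel h1
          · right; show x = -x0 - 2*a; linear_combination h1
        calc {x : K | f (x + a) - b = c}.ncard
            ≤ ({x0, -x0 - 2*a} : Set K).ncard := Set.ncard_le_ncard hsub (Set.toFinite _)
          _ ≤ 2 := le_trans (Set.ncard_insert_le _ _) (by simp)
    refine ⟨?_, ?_, hsol⟩
    · have hinj : Function.Injective (fun x : K => (Sum.inl (x, c) : ShiftPt K)) := by
        intro x y h; simpa using h
      have hoval_eq : ovalSet K c = insert (Sum.inr (Sum.inr ()) : ShiftPt K)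
          ((fun x : K => (Sum.inl (x, c) : ShiftPt K)) '' Set.univ) := by
        ext P
        constructor
        · rintro (⟨x, rfl⟩ | rfl)
          · exact Set.mem_insert_of_mem _ ⟨x, Set.mem_univ x, rfl⟩
          · exact Set.mem_insert _ _
        · rintro (rfl | ⟨x, -, rfl⟩)
          · exact Or.inr rfl
          · exact Or.inl ⟨x, rfl⟩
      rw [hoval_eq, Set.ncard_insert_of_notMem (by simp) (Set.toFinite _),
        Set.ncard_image_of_injective _ hinj, Set.ncard_univ, Nat.card_eq_fintype_card, hcard]
    · intro L hL
      rcases hL with ⟨a, b, rfl⟩ | ⟨a, rfl⟩ | rfl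
      · have hsub : affLine K f a b ∩ ovalSet K c ⊆
            (fun x : K => (Sum.inl (x, c) : ShiftPt K)) '' {x | f (x + a) - b = c} := by
          rintro P ⟨hP1, hP2⟩
          rcases hP1 with ⟨x, rfl⟩ | rfl
          · rcases hP2 with ⟨x', hx'⟩ | h
            · simp only [Sum.inl.injEq, Prod.mk.injEq] at hx'
              exact ⟨x, hx'.2, by rw [hx'.2]⟩
            · simp at h
          · rcases hP2 with ⟨x', hx'⟩ | h
            · simp at hx'
            · simp at h
        calc (affLine K f a b ∩ ovalSet K c).ncard
            ≤ ((fun x : K => (Sum.inl (x, c) : ShiftPt K)) '' {x | f (x + a) - b = c}).ncard :=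
              Set.ncard_le_ncard hsub (Set.toFinite _)
          _ ≤ ({x : K | f (x + a) - b = c}).ncard := Set.ncard_image_le (Set.toFinite _)
          _ ≤ 2 := hsol a b
      · have hsub : vertLine K a ∩ ovalSet K c ⊆
            ({Sum.inl (a, c), Sum.inr (Sum.inr ())} : Set (ShiftPt K)) := by
          rintro P ⟨hP1, hP2⟩
          rcases hP1 with ⟨y, rfl⟩ | rfl
          · rcases hP2 with ⟨x', hx'⟩ | h
            · simp only [Sum.inl.injEq, Prod.mk.injEq] at hx'
              left; rw [hx'.2]
            · simp at h
          · right; rfl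
        calc (vertLine K a ∩ ovalSet K c).ncard
            ≤ ({Sum.inl (a, c), Sum.inr (Sum.inr ())} : Set (ShiftPt K)).ncard :=
              Set.ncard_le_ncard hsub (Set.toFinite _)
          _ ≤ 2 := le_trans (Set.ncard_insert_le _ _) (by simp)
      · have hsub : lineAtInf K ∩ ovalSet K c ⊆
            ({Sum.inr (Sum.inr ())} : Set (ShiftPt K)) := by
          rintro P ⟨hP1, hP2⟩
          rcases hP2 with ⟨x', rfl⟩ | rfl
          · rcases hP1 with ⟨s, hs⟩; simp at hs
          · rfl
        calc (lineAtInf K ∩ ovalSet K c).ncard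
            ≤ ({Sum.inr (Sum.inr ())} : Set (ShiftPt K)).ncard :=
              Set.ncard_le_ncard hsub (Set.toFinite _)
          _ ≤ 2 := by simp
  · intro θ hθ
    ext P
    simp only [unitalSet, ovalSet, Set.mem_setOf_eq, Set.mem_iUnion, exists_prop]
    constructor
    · rintro (⟨x, t, ht, rfl⟩ | rfl)
      · exact ⟨t, ht, Or.inl ⟨x, rfl⟩⟩
      · exact ⟨1, one_pow _, Or.inr rfl⟩
    · rintro ⟨t, ht, ⟨x, rfl⟩ | rfl⟩
      · exact Or.inl ⟨x, t, ht, rfl⟩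
      · exact Or.inr rfl
end

section
/- Let q = pⁿ be an odd prime power, K a finite field with q² elements, F its subfield of order q, and d a positive integer such that f(x) = x^d is a planar function on K. For c ∈ K \ {0} and a field automorphism σ of K, let γ_{c,σ} be the map sending the affine point (x,y) to (σ(cx), σ(c^d y)). Then: (i) γ_{c,σ} maps each affine line L_{a,b} = {(x, (x+a)^d − b) : x ∈ K} onto the line L_{σ(ca), σ(c^d b)}, so γ_{c,σ} extends to a collineation of Π(x^d) fixing (∞), and these collineations form a group under composition; (ii) for any θ, θ′ ∈ K \ {0} such that θ^{q+1} and θ′^{q+1} are both nonsquares in F, there exist c ∈ K \ {0} and a field automorphism σ of K such that γ_{c,σ} maps {(x, tθ) : x ∈ K, t ∈ F} onto {(x, tθ′) : x ∈ K, t ∈ F}; hence all the unitals U_θ with θ^{q+1} a nonsquare in F are equivalent in Π(x^d). -/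
/-- The map `γ_{c,σ} : (x,y) ↦ (σ(cx), σ(c^d y))`, `(a) ↦ (σ(ca))`, `(∞) ↦ (∞)`
on the points of the shift plane `Π(x^d)`. -/
def gammaMap (K : Type) [Field K] (d : ℕ) (c : K) (σ : K ≃+* K) : ShiftPt K → ShiftPt K
  | Sum.inl (x, y) => Sum.inl (σ (c * x), σ (c ^ d * y))
  | Sum.inr (Sum.inl a) => Sum.inr (Sum.inl (σ (c * a)))
  | Sum.inr (Sum.inr _) => Sum.inr (Sum.inr ())

/-!
Since `(c(x+a))^d = c^d (x+a)^d`, the map `γ_{c,σ}` carries `L_{a,b}` to `L_{σ(ca),σ(c^d b)}`,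
and `γ_{σ(c⁻¹),σ⁻¹}` inverts it; moreover `γ_{c,id}` sends `U_θ` to `U_{c^d θ}`.
If `θ = y²` then `θ^{q+1} = (y^{q+1})²` with `y^{q+1} ∈ F`, so the hypotheses make `θ` and `θ'`
nonsquares of `K`, and `θ'/θ = s²`. Planarity of `x^d` leaves at most one nontrivial `d`-th
root of unity `ζ`, because `(ζ - 1)⁻¹` is a zero of `x ↦ (x+1)^d - x^d`. Hence the `d`-th powers
have index at most `2` in the cyclic group `Kˣ` and contain every square: `s² = c^d`.
-/

open Function Set

theorem Set.image_range_eq_range_of_comp_eq {α α' β γ : Type*} {F : β → γ} {g : α → β}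
    {g' : α' → γ} {φ : α → α'} (hφ : Surjective φ) (h : F ∘ g = g' ∘ φ) :
    F '' range g = range g' := by
  rw [← range_comp, h, hφ.range_comp]

theorem lineAtInf_eq_range (K : Type) : lineAtInf K = range Sum.inr := by
  ext P
  simp [lineAtInf, eq_comm]

section ShiftPlane

variable {K : Type} [Field K]

theorem affLine_eq_insert_range (f : K → K) (a b : K) :
    affLine K f a b = insert (.inr (.inl a)) (range fun x => .inl (x, f (x + a) - b)) := by
  ext P
  simp [affLine, or_comm, eq_comm]

theorem vertLine_eq_insert_range (a : K) :
    vertLine K a = insert (.inr (.inr ())) (range fun y => .inl (a, y)) := by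
  ext P
  simp [vertLine, or_comm, eq_comm]

theorem unitalSet_eq_insert_range (q : ℕ) (θ : K) :
    unitalSet K q θ = insert (.inr (.inr ()))
      (range fun p : K × {t : K // t ^ q = t} => .inl (p.1, p.2 * θ)) := by
  ext P
  simp [unitalSet, or_comm, eq_comm]

variable (d : ℕ) {c : K} (σ : K ≃+* K)

theorem gammaMap_inl (x y : K) :
    gammaMap K d c σ (.inl (x, y)) = .inl (σ (c * x), σ (c ^ d * y)) := rfl

theorem gammaMap_comp (c' : K) (σ' : K ≃+* K) :
    gammaMap K d c σ ∘ gammaMap K d c' σ' = gammaMap K d (σ'.symm c * c') (σ'.trans σ) := by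
  funext P
  rcases P with ⟨x, y⟩ | a | u <;> simp [gammaMap, mul_pow, mul_assoc]

theorem gammaMap_one_refl : gammaMap K d 1 (RingEquiv.refl K) = id := by
  funext P
  rcases P with ⟨x, y⟩ | a | u <;> simp [gammaMap]

theorem gammaMap_bijective (hc : c ≠ 0) : Bijective (gammaMap K d c σ) := by
  have hleft : gammaMap K d (σ c⁻¹) σ.symm ∘ gammaMap K d c σ = id := by
    rw [gammaMap_comp, σ.symm_apply_apply, inv_mul_cancel₀ hc, σ.self_trans_symm,
      gammaMap_one_refl]
  have hright : gammaMap K d c σ ∘ gammaMap K d (σ c⁻¹) σ.symm = id := by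
    rw [gammaMap_comp, σ.symm_symm, ← map_mul, mul_inv_cancel₀ hc, map_one,
      σ.symm_trans_self, gammaMap_one_refl]
  exact bijective_iff_has_inverse.mpr ⟨_, congrFun hleft, congrFun hright⟩

theorem image_gammaMap_affLine (hc : c ≠ 0) (a b : K) :
    gammaMap K d c σ '' affLine K (· ^ d) a b = affLine K (· ^ d) (σ (c * a)) (σ (c ^ d * b)) := by
  rw [affLine_eq_insert_range, affLine_eq_insert_range, image_insert_eq]
  congr 1
  refine image_range_eq_range_of_comp_eq (σ.surjective.comp (mul_left_surjective₀ hc)) ?_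
  funext x
  simp only [comp_apply, gammaMap_inl]
  rw [← map_add, ← mul_add, ← map_pow, ← map_sub, mul_pow, mul_sub]

theorem image_gammaMap_vertLine (hc : c ≠ 0) (a : K) :
    gammaMap K d c σ '' vertLine K a = vertLine K (σ (c * a)) := by
  rw [vertLine_eq_insert_range, vertLine_eq_insert_range, image_insert_eq]
  exact congrArg _ (image_range_eq_range_of_comp_eq
    (σ.surjective.comp (mul_left_surjective₀ (pow_ne_zero d hc))) rfl)

theorem image_gammaMap_lineAtInf (hc : c ≠ 0) :
    gammaMap K d c σ '' lineAtInf K = lineAtInf K := by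
  rw [lineAtInf_eq_range K]
  refine image_range_eq_range_of_comp_eq (φ := Sum.map (fun a => σ (c * a)) id)
    (Sum.map_surjective.mpr ⟨σ.surjective.comp (mul_left_surjective₀ hc), surjective_id⟩) ?_
  funext s
  rcases s with a | u <;> rfl

theorem image_gammaMap_mem_shiftLines (hc : c ≠ 0) {L : Set (ShiftPt K)}
    (hL : L ∈ shiftLines K (· ^ d)) : gammaMap K d c σ '' L ∈ shiftLines K (· ^ d) := by
  rcases hL with ⟨a, b, rfl⟩ | ⟨a, rfl⟩ | rfl
  · exact Or.inl ⟨_, _, image_gammaMap_affLine d σ hc a b⟩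
  · exact Or.inr (Or.inl ⟨_, image_gammaMap_vertLine d σ hc a⟩)
  · exact Or.inr (Or.inr (image_gammaMap_lineAtInf d σ hc))

theorem image_gammaMap_refl_unitalSet (hc : c ≠ 0) (q : ℕ) (θ : K) :
    gammaMap K d c (RingEquiv.refl K) '' unitalSet K q θ = unitalSet K q (c ^ d * θ) := by
  rw [unitalSet_eq_insert_range, unitalSet_eq_insert_range, image_insert_eq]
  refine congrArg _ (image_range_eq_range_of_comp_eq
    ((mul_left_surjective₀ hc).prodMap surjective_id) ?_)
  funext p
  simp only [comp_apply, gammaMap_inl, RingEquiv.refl_apply, Prod.map_fst, Prod.map_snd, id]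
  congr 2
  ring

end ShiftPlane

section PowerMap

variable {K : Type} [Field K] {d : ℕ}

theorem eq_of_pow_eq_one_of_injective_sub_pow
    (hinj : Injective fun x : K => (x + 1) ^ d - x ^ d) {ζ ξ : K}
    (hζ : ζ ^ d = 1) (hξ : ξ ^ d = 1) (hζ1 : ζ ≠ 1) (hξ1 : ξ ≠ 1) : ζ = ξ := by
  have root : ∀ η : K, η ^ d = 1 → η ≠ 1 → ((η - 1)⁻¹ + 1) ^ d - ((η - 1)⁻¹) ^ d = 0 := by
    intro η hη hη1
    have hshift : (η - 1)⁻¹ + 1 = η * (η - 1)⁻¹ := by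
      field_simp [sub_ne_zero.mpr hη1]
      ring
    rw [hshift, mul_pow, hη, one_mul, sub_self]
  simpa using hinj ((root ζ hζ hζ1).trans (root ξ hξ hξ1).symm)

theorem card_ker_powMonoidHom_le_two [Finite K]
    (hinj : Injective fun x : K => (x + 1) ^ d - x ^ d) :
    Nat.card (powMonoidHom d : Kˣ →* Kˣ).ker ≤ 2 := by
  set H := (powMonoidHom d : Kˣ →* Kˣ).ker
  rcases H.bot_or_exists_ne_one with hH | ⟨ζ, hζH, hζ1⟩
  · simp [hH]
  have hval : ∀ η ∈ H, (η : K) ^ d = 1 := fun η (hη : η ^ d = 1) => by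
    rw [← Units.val_pow_eq_pow_val, hη, Units.val_one]
  have hsub : (H : Set Kˣ) ⊆ {1, ζ} := by
    intro ξ hξH
    by_cases hξ1 : ξ = 1
    · exact Or.inl hξ1
    exact Or.inr (Units.val_injective (eq_of_pow_eq_one_of_injective_sub_pow hinj
      (hval ξ hξH) (hval ζ hζH) (by simpa using hξ1) (by simpa using hζ1)))
  calc Nat.card H = (H : Set Kˣ).ncard := rfl
    _ ≤ ({1, ζ} : Set Kˣ).ncard := Set.ncard_le_ncard hsub
    _ ≤ 2 := (Set.ncard_insert_le _ _).trans (by simp)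

theorem sq_mem_range_powMonoidHom [Finite K]
    (hinj : Injective fun x : K => (x + 1) ^ d - x ^ d) (u : Kˣ) :
    u ^ 2 ∈ (powMonoidHom d : Kˣ →* Kˣ).range := by
  set H := (powMonoidHom d : Kˣ →* Kˣ).range
  -- In the cyclic group `Kˣ` the kernel and the cokernel of `u ↦ u ^ d` have the same order.
  have hindex : H.index ∣ 2 := by
    have h := card_ker_powMonoidHom_le_two hinj
    rw [IsCyclic.card_powMonoidHom_ker, ← IsCyclic.index_powMonoidHom_range] at h
    interval_cases hi : H.index
    · exact absurd hi H.index_ne_zero_of_finite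
    all_goals norm_num
  obtain ⟨k, hk⟩ := hindex
  rw [hk, pow_mul]
  exact H.pow_mem (H.pow_index_mem u) k

theorem isSquare_div_of_not_isSquare [Fintype K] {a b : K} (ha : ¬IsSquare a)
    (hb : ¬IsSquare b) : IsSquare (a / b) := by
  classical
  have hb0 : b ≠ 0 := fun h => hb (h ▸ IsSquare.zero)
  have ha0 : a ≠ 0 := fun h => ha (h ▸ IsSquare.zero)
  rw [← quadraticChar_one_iff_isSquare (div_ne_zero ha0 hb0)]
  have h : quadraticChar K (a / b) * quadraticChar K b = quadraticChar K a := by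
    rw [← map_mul, div_mul_cancel₀ a hb0]
  rw [quadraticChar_neg_one_iff_not_isSquare.mpr ha,
    quadraticChar_neg_one_iff_not_isSquare.mpr hb] at h
  linarith

end PowerMap

theorem IsSquare.exists_sq_eq_pow_succ {K : Type} [Field K] [Fintype K] {q : ℕ}
    (hcard : Fintype.card K = q ^ 2) {θ : K} (h : IsSquare θ) :
    ∃ s : K, s ^ q = s ∧ s ^ 2 = θ ^ (q + 1) := by
  obtain ⟨y, rfl⟩ := h
  have hfrob : y ^ q ^ 2 = y := hcard ▸ FiniteField.pow_card y
  refine ⟨y ^ (q + 1), ?_, by ring⟩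
  rw [← pow_mul, add_mul, one_mul, ← pow_two, pow_add, hfrob, pow_succ']

theorem stmt11_general (q : ℕ)
    (K : Type) [Field K] [Fintype K] (hcard : Fintype.card K = q ^ 2)
    (d : ℕ)
    (hplanar : ∀ a : K, a ≠ 0 →
      Function.Bijective (fun x : K => (x + a) ^ d - x ^ d)) :
    (∀ c : K, c ≠ 0 → ∀ σ : K ≃+* K,
      (∀ a b : K,
        gammaMap K d c σ '' affLine K (fun x : K => x ^ d) a b
          = affLine K (fun x : K => x ^ d) (σ (c * a)) (σ (c ^ d * b))) ∧
      Function.Bijective (gammaMap K d c σ) ∧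
      (∀ L ∈ shiftLines K (fun x : K => x ^ d),
        gammaMap K d c σ '' L ∈ shiftLines K (fun x : K => x ^ d)) ∧
      gammaMap K d c σ (Sum.inr (Sum.inr ())) = Sum.inr (Sum.inr ())) ∧
    (∀ c c' : K, c ≠ 0 → c' ≠ 0 → ∀ σ σ' : K ≃+* K,
      ∃ (c'' : K) (σ'' : K ≃+* K), c'' ≠ 0 ∧
        gammaMap K d c σ ∘ gammaMap K d c' σ' = gammaMap K d c'' σ'') ∧
    (∀ θ θ' : K, θ ≠ 0 → θ' ≠ 0 →
      (¬ ∃ s : K, s ^ q = s ∧ s ^ 2 = θ ^ (q + 1)) →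
      (¬ ∃ s : K, s ^ q = s ∧ s ^ 2 = θ' ^ (q + 1)) →
      ∃ (c : K) (σ : K ≃+* K), c ≠ 0 ∧
        gammaMap K d c σ '' unitalSet K q θ = unitalSet K q θ') := by
  refine ⟨fun c hc σ => ⟨image_gammaMap_affLine d σ hc, gammaMap_bijective d σ hc,
      fun _ => image_gammaMap_mem_shiftLines d σ hc, rfl⟩,
    fun c c' hc hc' σ σ' => ⟨_, _, mul_ne_zero ((map_ne_zero σ'.symm).mpr hc) hc',
      gammaMap_comp d σ c' σ'⟩, ?_⟩
  intro θ θ' hθ hθ' hns hns'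
  obtain ⟨s, hs⟩ := isSquare_div_of_not_isSquare
    (fun h => hns' (h.exists_sq_eq_pow_succ hcard)) (fun h => hns (h.exists_sq_eq_pow_succ hcard))
  have hs0 : s ≠ 0 := by rintro rfl; simp [hθ, hθ'] at hs
  obtain ⟨c, hc⟩ := sq_mem_range_powMonoidHom (hplanar 1 one_ne_zero).1 (Units.mk0 s hs0)
  have hcd : (c : K) ^ d = θ' / θ := by
    simpa [hs, sq] using congrArg Units.val hc
  refine ⟨c, RingEquiv.refl K, c.ne_zero, ?_⟩
  rw [image_gammaMap_refl_unitalSet d c.ne_zero, hcd, div_mul_cancel₀ θ' hθ]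

/-- Proposition 3.3.  For the planar power map `f(x) = x^d` on
`K = F_{q²}`: (i) each `γ_{c,σ}` (`c ≠ 0`, `σ` a field automorphism) maps the line
`L_{a,b}` onto `L_{σ(ca),σ(c^d b)}`, is a collineation of `Π(x^d)` fixing `(∞)`,
and these maps are closed under composition (they form a group); (ii) any two
unitals `U_θ`, `U_θ′` with `θ^{q+1}`, `θ′^{q+1}` nonsquares in `F` are mapped onto
each other by some `γ_{c,σ}`, i.e. all such unitals are equivalent in `Π(x^d)`. -/
theorem stmt11 (p n q : ℕ) (hp : Nat.Prime p) (hpodd : Odd p) (hn : 0 < n) (hq : q = p ^ n)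
    (K : Type) [Field K] [Fintype K] (hcard : Fintype.card K = q ^ 2)
    (d : ℕ) (hd : 0 < d)
    (hplanar : ∀ a : K, a ≠ 0 →
      Function.Bijective (fun x : K => (x + a) ^ d - x ^ d)) :
    (∀ c : K, c ≠ 0 → ∀ σ : K ≃+* K,
      (∀ a b : K,
        gammaMap K d c σ '' affLine K (fun x : K => x ^ d) a b
          = affLine K (fun x : K => x ^ d) (σ (c * a)) (σ (c ^ d * b))) ∧
      Function.Bijective (gammaMap K d c σ) ∧
      (∀ L ∈ shiftLines K (fun x : K => x ^ d),
        gammaMap K d c σ '' L ∈ shiftLines K (fun x : K => x ^ d)) ∧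
      gammaMap K d c σ (Sum.inr (Sum.inr ())) = Sum.inr (Sum.inr ())) ∧
    (∀ c c' : K, c ≠ 0 → c' ≠ 0 → ∀ σ σ' : K ≃+* K,
      ∃ (c'' : K) (σ'' : K ≃+* K), c'' ≠ 0 ∧
        gammaMap K d c σ ∘ gammaMap K d c' σ' = gammaMap K d c'' σ'') ∧
    (∀ θ θ' : K, θ ≠ 0 → θ' ≠ 0 →
      (¬ ∃ s : K, s ^ q = s ∧ s ^ 2 = θ ^ (q + 1)) →
      (¬ ∃ s : K, s ^ q = s ∧ s ^ 2 = θ' ^ (q + 1)) →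
      ∃ (c : K) (σ : K ≃+* K), c ≠ 0 ∧
        gammaMap K d c σ '' unitalSet K q θ = unitalSet K q θ') :=
  stmt11_general q K hcard d hplanar
end

section
/- Let q be an odd prime power, K a finite field with q² elements, F its subfield of order q, f : K → K a planar function, and δ ∈ K \ {0}. Define φ : K → F by φ(x) = δf(x) + (δf(x))^q, and for a ∈ K and β ∈ F \ {0} define the circle C_{a,β} = {x ∈ K : φ(x+a) = β}. Assume that for every β ∈ F \ {0} the set {x ∈ K : φ(x) = β} has exactly q+1 elements. If a, a′ ∈ K and β, β′ ∈ F \ {0} satisfy C_{a,β} = C_{a′,β′}, then a = a′ and β = β′. (In particular, for a ≠ a′ and any c ∈ F there are exactly q elements x ∈ K with φ(x+a′) − φ(x+a) = c.) -/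
open Polynomial in
lemma aux_root_card12 {K : Type} [Field K] [Fintype K] [DecidableEq K]
    {q : ℕ} (hq : 2 ≤ q) (u v : K) :
    (Finset.univ.filter fun z : K => z ^ q + u * z + v = 0).card ≤ q := by
  set P : Polynomial K := X ^ q + (C u * X + C v) with hP
  have hdeg : P.degree = q := by
    rw [hP, Polynomial.degree_add_eq_left_of_degree_lt, Polynomial.degree_X_pow]
    rw [Polynomial.degree_X_pow]
    exact lt_of_le_of_lt (Polynomial.degree_linear_le)
      (by exact_mod_cast Nat.lt_of_lt_of_le one_lt_two hq)
  have hP0 : P ≠ 0 := by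
    intro h
    rw [h, Polynomial.degree_zero] at hdeg
    exact absurd hdeg (by simp)
  have hnd : P.natDegree = q := Polynomial.natDegree_eq_of_degree_eq_some hdeg
  calc (Finset.univ.filter fun z : K => z ^ q + u * z + v = 0).card
      ≤ P.roots.toFinset.card := by
        apply Finset.card_le_card
        intro z hz
        simp only [Finset.mem_filter] at hz
        rw [Multiset.mem_toFinset, Polynomial.mem_roots hP0]
        simp [hP, Polynomial.IsRoot, ← add_assoc, hz.2]
    _ ≤ Multiset.card P.roots := Multiset.toFinset_card_le _
    _ ≤ P.natDegree := Polynomial.card_roots' P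
    _ = q := hnd

/-- Lemma 3.7 (d) (and its proof).  Let `f` be planar on `K = F_{q²}`,
`δ ≠ 0`, and `φ(x) = δf(x) + (δf(x))^q` (the relative trace of `δf(x)` to the
subfield `F` of order `q`).  If every `β ∈ F \ {0}` has exactly `q+1` preimages
under `φ`, then two circles `C_{a,β} = {x : φ(x+a) = β}` (`β ∈ F \ {0}`) coincide
only if `a = a′` and `β = β′`.  In particular, for `a ≠ a′` and any `c ∈ F` there
are exactly `q` elements `x` with `φ(x+a′) − φ(x+a) = c`. -/
theorem stmt12 (p m q : ℕ) (hp : Nat.Prime p) (hpodd : Odd p) (hm : 0 < m) (hq : q = p ^ m)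
    (K : Type) [Field K] [Fintype K] (hcard : Fintype.card K = q ^ 2)
    (f : K → K)
    (hplanar : ∀ a : K, a ≠ 0 → Function.Bijective (fun x : K => f (x + a) - f x))
    (δ : K) (hδ : δ ≠ 0)
    (φ : K → K) (hφ : ∀ x : K, φ x = δ * f x + (δ * f x) ^ q)
    (hcount : ∀ β : K, β ^ q = β → β ≠ 0 → {x : K | φ x = β}.ncard = q + 1) :
    (∀ a a' β β' : K, β ^ q = β → β ≠ 0 → β' ^ q = β' → β' ≠ 0 →
      {x : K | φ (x + a) = β} = {x : K | φ (x + a') = β'} → a = a' ∧ β = β') ∧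
    (∀ a a' : K, a ≠ a' → ∀ c : K, c ^ q = c →
      {x : K | φ (x + a') - φ (x + a) = c}.ncard = q) := by
  classical
  haveI : Fact p.Prime := ⟨hp⟩
  have hq2 : 2 ≤ q := by
    subst hq
    calc 2 ≤ p := hp.two_le
      _ ≤ p ^ m := Nat.le_self_pow hm.ne' p
  -- characteristic
  have hrc : ringChar K = p := by
    obtain ⟨n, hrp, hcn⟩ := FiniteField.card K (ringChar K)
    have hdvd : p ∣ (ringChar K) ^ (n : ℕ) := by
      rw [← hcn, hcard, hq]
      rw [← pow_mul]
      exact dvd_pow_self p (Nat.mul_ne_zero hm.ne' two_ne_zero)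
    exact ((Nat.prime_dvd_prime_iff_eq hp hrp).mp (hp.dvd_of_dvd_pow hdvd)).symm
  haveI : CharP K p := hrc ▸ ringChar.charP K
  -- Frobenius-type identities
  have hadd : ∀ x y : K, (x + y) ^ q = x ^ q + y ^ q := by
    intro x y; rw [hq]; exact add_pow_char_pow x y p m
  have hsub : ∀ x y : K, (x - y) ^ q = x ^ q - y ^ q := by
    intro x y; rw [hq]; exact sub_pow_char_pow x y m
  have hqq : ∀ x : K, (x ^ q) ^ q = x := by
    intro x
    rw [← pow_mul, ← sq, ← hcard]
    exact FiniteField.pow_card x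
  -- trace fiber count
  have hT : ∀ c : K, c ^ q = c → {z : K | z + z ^ q = c}.ncard = q := by
    intro c hc
    set Fs : Finset K := Finset.univ.filter fun y : K => y ^ q = y with hFs
    have hFscard : Fs.card ≤ q := by
      have : Fs = Finset.univ.filter fun y : K => y ^ q + (-1) * y + 0 = 0 := by
        apply Finset.filter_congr
        intro y _
        constructor <;> intro h <;> linear_combination h
      rw [this]
      exact aux_root_card12 hq2 (-1) 0
    have hfib : ∀ c' : K, (Finset.univ.filter fun z : K => z + z ^ q = c').card ≤ q := by
      intro c'
      have : (Finset.univ.filter fun z : K => z + z ^ q = c')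
          = Finset.univ.filter fun z : K => z ^ q + 1 * z + (-c') = 0 := by
        apply Finset.filter_congr
        intro z _
        constructor <;> intro h <;> linear_combination h
      rw [this]
      exact aux_root_card12 hq2 1 (-c')
    have hmem : ∀ z : K, z + z ^ q ∈ Fs := by
      intro z
      simp only [hFs, Finset.mem_filter, Finset.mem_univ, true_and]
      rw [hadd, hqq]
      ring
    have hsum : ∑ c' ∈ Fs, (Finset.univ.filter fun z : K => z + z ^ q = c').card = q ^ 2 := by
      rw [← hcard, ← Finset.card_univ]
      exact (Finset.card_eq_sum_card_fiberwise fun z _ => hmem z).symm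
    have hcFs : c ∈ Fs := by
      simp only [hFs, Finset.mem_filter, Finset.mem_univ, true_and]; exact hc
    have hkey : (Finset.univ.filter fun z : K => z + z ^ q = c).card = q := by
      by_contra hne
      have hlt : (Finset.univ.filter fun z : K => z + z ^ q = c).card < q :=
        lt_of_le_of_ne (hfib c) hne
      have hslt : ∑ c' ∈ Fs, (Finset.univ.filter fun z : K => z + z ^ q = c').card
          < ∑ _c' ∈ Fs, q :=
        Finset.sum_lt_sum (fun i _ => hfib i) ⟨c, hcFs, hlt⟩
      rw [Finset.sum_const, smul_eq_mul, hsum] at hslt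
      have : Fs.card * q ≤ q * q := Nat.mul_le_mul_right q hFscard
      nlinarith [hslt, this]
    rw [Set.ncard_eq_toFinset_card']
    have hts : {z : K | z + z ^ q = c}.toFinset
        = Finset.univ.filter fun z : K => z + z ^ q = c := by
      ext z; simp
    rw [hts, hkey]
  -- translation invariance via bijections
  have hpre : ∀ (g : K → K), Function.Bijective g → ∀ S : Set K,
      (g ⁻¹' S).ncard = S.ncard := by
    intro g hg S
    calc (g ⁻¹' S).ncard = (g '' (g ⁻¹' S)).ncard :=
          (Set.ncard_image_of_injective _ hg.injective).symm
      _ = S.ncard := by rw [Set.image_preimage_eq S hg.surjective]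
  -- part 2 core
  have hdiff : ∀ a a' : K, a ≠ a' → ∀ c : K, c ^ q = c →
      {x : K | φ (x + a') - φ (x + a) = c}.ncard = q := by
    intro a a' haa c hc
    set g : K → K := fun x => δ * (f (x + a') - f (x + a)) with hg
    have hb : a' - a ≠ 0 := sub_ne_zero_of_ne (Ne.symm haa)
    have hgbij : Function.Bijective g := by
      have h1 : Function.Bijective (fun x : K => x + a) :=
        ⟨add_left_injective a, fun y => ⟨y - a, sub_add_cancel y a⟩⟩
      have h2 := hplanar (a' - a) hb
      have h3 : Function.Bijective (fun z : K => δ * z) := mul_right_bijective_of_finite₀ hδ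
      have : g = (fun z : K => δ * z) ∘ (fun x : K => f (x + (a' - a)) - f x)
          ∘ (fun x : K => x + a) := by
        funext x
        simp only [hg, Function.comp_apply]
        congr 2
        ring_nf
      rw [this]
      exact h3.comp (h2.comp h1)
    have hset : {x : K | φ (x + a') - φ (x + a) = c}
        = g ⁻¹' {z : K | z + z ^ q = c} := by
      ext x
      simp only [Set.mem_setOf_eq, Set.mem_preimage, hg]
      have : g x + (g x) ^ q = φ (x + a') - φ (x + a) := by
        simp only [hg, hφ]
        rw [mul_sub, hsub, mul_pow]
        ring
      simp only [hg] at this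
      rw [this]
    rw [hset, hpre g hgbij, hT c hc]
  refine ⟨?_, hdiff⟩
  intro a a' β β' hβq hβ0 hβ'q hβ'0 hset
  by_cases hA : a = a'
  · subst hA
    have hne : {x : K | φ (x + a) = β}.Nonempty := by
      apply Set.nonempty_of_ncard_ne_zero
      have : {x : K | φ (x + a) = β}.ncard = q + 1 := by
        have : {x : K | φ (x + a) = β} = (fun x : K => x + a) ⁻¹' {x : K | φ x = β} := rfl
        rw [this, hpre _ ⟨add_left_injective a, fun y => ⟨y - a, sub_add_cancel y a⟩⟩]
        exact hcount β hβq hβ0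
      omega
    obtain ⟨x, hx⟩ := hne
    have hx' : x ∈ {x : K | φ (x + a) = β'} := hset ▸ hx
    exact ⟨rfl, by rw [← hx, ← hx']⟩
  · exfalso
    have hcq : (β' - β) ^ q = β' - β := by rw [hsub, hβq, hβ'q]
    have hD := hdiff a a' hA (β' - β) hcq
    have hCcard : {x : K | φ (x + a) = β}.ncard = q + 1 := by
      have : {x : K | φ (x + a) = β} = (fun x : K => x + a) ⁻¹' {x : K | φ x = β} := rfl
      rw [this, hpre _ ⟨add_left_injective a, fun y => ⟨y - a, sub_add_cancel y a⟩⟩]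
      exact hcount β hβq hβ0
    have hsubset : {x : K | φ (x + a) = β} ⊆ {x : K | φ (x + a') - φ (x + a) = β' - β} := by
      intro x hx
      have hx' : x ∈ {x : K | φ (x + a') = β'} := hset ▸ hx
      simp only [Set.mem_setOf_eq] at hx hx' ⊢
      rw [hx, hx']
    have := Set.ncard_le_ncard hsubset (Set.toFinite _)
    omega
end

section
/- Let q be an odd prime power, K a finite field with q² elements, F its subfield of order q, f : K → K a planar function, and δ ∈ K \ {0}. Define φ : K → F by φ(x) = δf(x) + (δf(x))^q, and assume that {x ∈ K : φ(x) = 0} has exactly one element and that for every β ∈ F \ {0} the set {x ∈ K : φ(x) = β} has exactly q+1 elements. Then for any two distinct u, v ∈ K there are exactly q elements a ∈ K with φ(u+a) = φ(v+a) ≠ 0; consequently any two distinct points of K lie on exactly q circles C_{a,β}, and the pair (K, {C_{a,β} : a ∈ K, β ∈ F \ {0}}) is a 2-(q², q+1, q) design. -/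
/-!
Write `φ = T ∘ f` with `T y = δ y + (δ y) ^ q`, the trace of `δ y` onto the subfield `F` of
order `q`. `T` is additive with values in `F`, and its kernel consists of roots of a polynomial
of degree `q`; as `|K| = q²`, both kernel and image have exactly `q` elements, so every nonempty
fibre of `T` has `q` elements. Planarity makes `x ↦ f (x + c) - f x` a bijection, so a level set
of `x ↦ φ (x + c) - φ x` has the size of a fibre of `T`: at most `q`, and exactly `q` at `0`.
Translating by `v` gives the `q` centres `a`, and since `φ` has a single zero the condition
`φ (u + a) ≠ 0` is automatic. Distinct centres give distinct circles through `u`, because a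
circle has `q + 1` points while two equal circles would put one inside such a level set.
-/

open Polynomial

theorem Set.ncard_preimage_of_bijective {α β : Type*} {f : α → β} (hf : f.Bijective)
    (t : Set β) : (f ⁻¹' t).ncard = t.ncard := by
  simp only [Set.ncard, Set.encard_preimage_of_bijective hf]

theorem ncard_setOf_pow_add_mul_eq_zero_le {K : Type*} [Field K] {n : ℕ} (hn : 2 ≤ n) (c : K) :
    {x : K | x ^ n + c * x = 0}.ncard ≤ n := by
  have hdeg : (C c * X).degree < (n : WithBot ℕ) :=
    (degree_C_mul_X_le c).trans_lt (by exact_mod_cast (by omega : 1 < n))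
  have hmonic : (X ^ n + C c * X).Monic := monic_X_pow_add hdeg
  have hset : {x : K | x ^ n + c * x = 0} = (X ^ n + C c * X).rootSet K := by
    ext x
    simp [mem_rootSet, hmonic.ne_zero]
  rw [hset]
  refine (ncard_rootSet_le _ K).trans ?_
  rw [natDegree_add_eq_left_of_degree_lt (by simpa using hdeg), natDegree_X_pow]

section AddMonoidHom

variable {G H : Type*} [AddGroup G] [AddGroup H]

theorem AddMonoidHom.ncard_setOf_eq_apply (g : G →+ H) (x₀ : G) :
    {y | g y = g x₀}.ncard = Nat.card g.ker := by
  have hset : {y | g y = g x₀} = (fun y => y - x₀) ⁻¹' (g.ker : Set G) := by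
    ext y
    simp [sub_eq_zero]
  rw [hset, Set.ncard_preimage_of_bijective (f := (· - x₀)) (Equiv.subRight x₀).bijective,
    ← Nat.card_coe_set_eq, SetLike.coe_sort_coe]

theorem AddMonoidHom.ncard_setOf_eq_le (g : G →+ H) (t : H) :
    {y | g y = t}.ncard ≤ Nat.card g.ker := by
  obtain ⟨x₀, rfl⟩ | hempty := em (∃ x₀, g x₀ = t)
  · exact (g.ncard_setOf_eq_apply x₀).le
  · simp_all

end AddMonoidHom

theorem ncard_setOf_map_sub_eq_of_bijective {G G' H : Type*} [AddGroup G] [AddGroup G'] [AddGroup H]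
    {f : G → G'} (g : G' →+ H) {c : G} (hf : (fun x => f (x + c) - f x).Bijective) (t : H) :
    {x | g (f (x + c)) - g (f x) = t}.ncard = {y | g y = t}.ncard := by
  have hset : {x | g (f (x + c)) - g (f x) = t} =
      (fun x => f (x + c) - f x) ⁻¹' {y | g y = t} := by
    ext x
    simp
  rw [hset, Set.ncard_preimage_of_bijective hf]

section FiniteField

variable {K : Type*} [Field K] {p m : ℕ} [Fact p.Prime] [CharP K p]

/-- When `|K| = (p ^ m) ^ 2`, this is `y ↦ Tr(δ y)`, with `Tr` the trace onto the subfield of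
order `p ^ m`. -/
def traceMul (p m : ℕ) [Fact p.Prime] [CharP K p] (δ : K) : K →+ K :=
  AddMonoidHom.mulLeft δ + (iterateFrobenius K p m).toAddMonoidHom.comp (AddMonoidHom.mulLeft δ)

@[simp]
theorem traceMul_apply (δ y : K) : traceMul p m δ y = δ * y + (δ * y) ^ p ^ m := rfl

variable [Fintype K]

theorem two_le_of_card_eq_sq {q : ℕ} (hcard : Fintype.card K = q ^ 2) : 2 ≤ q := by
  have := hcard ▸ Fintype.one_lt_card (α := K)
  nlinarith

theorem pow_pow_eq_self_of_card_eq_sq {q : ℕ} (hcard : Fintype.card K = q ^ 2) (x : K) :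
    (x ^ q) ^ q = x := by
  rw [← pow_mul, ← sq, ← hcard, FiniteField.pow_card]

variable (hcard : Fintype.card K = (p ^ m) ^ 2)
include hcard

theorem traceMul_pow_eq_self (δ y : K) : traceMul p m δ y ^ p ^ m = traceMul p m δ y := by
  rw [traceMul_apply, add_pow_char_pow, pow_pow_eq_self_of_card_eq_sq hcard, add_comm]

theorem card_range_traceMul_le (δ : K) : Nat.card (traceMul p m δ).range ≤ p ^ m := by
  rw [← SetLike.coe_sort_coe, Nat.card_coe_set_eq, AddMonoidHom.coe_range]
  calc (Set.range (traceMul p m δ)).ncard ≤ {x : K | x ^ p ^ m + -1 * x = 0}.ncard := by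
        refine Set.ncard_le_ncard ?_ (Set.toFinite _)
        rintro _ ⟨y, rfl⟩
        simp only [Set.mem_ofPred_eq, traceMul_pow_eq_self hcard, neg_one_mul, add_neg_cancel]
    _ ≤ p ^ m := ncard_setOf_pow_add_mul_eq_zero_le (two_le_of_card_eq_sq hcard) _

theorem card_ker_traceMul_le {δ : K} (hδ : δ ≠ 0) :
    Nat.card (traceMul p m δ).ker ≤ p ^ m := by
  have hset : ((traceMul p m δ).ker : Set K) =
      (δ * ·) ⁻¹' {z : K | z ^ p ^ m + 1 * z = 0} := by
    ext y
    simp [add_comm]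
  rw [← SetLike.coe_sort_coe, Nat.card_coe_set_eq, hset,
    Set.ncard_preimage_of_bijective (f := (δ * ·)) (Equiv.mulLeft₀ δ hδ).bijective]
  exact ncard_setOf_pow_add_mul_eq_zero_le (two_le_of_card_eq_sq hcard) _

theorem card_ker_traceMul {δ : K} (hδ : δ ≠ 0) : Nat.card (traceMul p m δ).ker = p ^ m := by
  have hprod := (traceMul p m δ).ker.card_mul_index
  rw [AddSubgroup.index_ker, Nat.card_eq_fintype_card (α := K), hcard] at hprod
  have hker := card_ker_traceMul_le hcard hδ
  have hrange := card_range_traceMul_le hcard δ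
  nlinarith

end FiniteField

section Circles

variable {G : Type*} [AddCommGroup G] (φ : G → G)

def circle (a β : G) : Set G := {x | φ (x + a) = β}

theorem ncard_circle (a β : G) : (circle φ a β).ncard = {x | φ x = β}.ncard :=
  Set.ncard_preimage_of_bijective (f := (· + a)) (Equiv.addRight a).bijective {x | φ x = β}

variable {φ} {k : ℕ}

theorem ncard_setOf_apply_add_eq_apply_add_ne_zero (hzero : {x | φ x = 0}.Subsingleton)
    (hself : ∀ c ≠ 0, {x | φ (x + c) = φ x}.ncard = k) {u v : G} (huv : u ≠ v) :
    {a | φ (u + a) = φ (v + a) ∧ φ (u + a) ≠ 0}.ncard = k := by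
  have hset : {a | φ (u + a) = φ (v + a) ∧ φ (u + a) ≠ 0} =
      (v + ·) ⁻¹' {x | φ (x + (u - v)) = φ x} := by
    ext a
    simp only [Set.mem_ofPred_eq, Set.mem_preimage, show v + a + (u - v) = u + a by abel]
    refine ⟨And.left, fun h => ⟨h, fun h0 => huv ?_⟩⟩
    exact add_right_cancel (hzero h0 (h ▸ h0 : φ (v + a) = 0))
  rw [hset, Set.ncard_preimage_of_bijective (f := (v + ·)) (Equiv.addLeft v).bijective,
    hself _ (sub_ne_zero.mpr huv)]

variable [Finite G]

/-- A nonzero level set of `φ` is too large to fit inside a level set of a difference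
`x ↦ φ (x + c) - φ x`, which is what two equal circles with different centres would force. -/
theorem injOn_circle (hfib : ∀ x, φ x ≠ 0 → k < {y | φ y = φ x}.ncard)
    (hdiff : ∀ c ≠ 0, ∀ t, {x | φ (x + c) - φ x = t}.ncard ≤ k) (u : G) :
    Set.InjOn (fun a => circle φ a (φ (u + a))) {a | φ (u + a) ≠ 0} := by
  intro a ha a' _ heq
  change circle φ a (φ (u + a)) = circle φ a' (φ (u + a')) at heq
  by_contra hne
  have hsub : {y | φ y = φ (u + a)} ⊆
      {y | φ (y + (a' - a)) - φ y = φ (u + a') - φ (u + a)} := by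
    intro y hy
    have hmem : y - a ∈ circle φ a' (φ (u + a')) := by
      rw [← heq]
      simpa [circle] using hy
    simp only [circle, Set.mem_ofPred_eq, show y - a + a' = y + (a' - a) by abel] at hmem
    simp only [Set.mem_ofPred_eq] at hy ⊢
    rw [hmem, hy]
  exact lt_irrefl k <| (hfib _ ha).trans_le <|
    (Set.ncard_le_ncard hsub (Set.toFinite _)).trans (hdiff _ (sub_ne_zero.mpr (Ne.symm hne)) _)

theorem ncard_setOf_circle_mem_mem (P : G → Prop) (hP : ∀ x, P (φ x))
    (hzero : {x | φ x = 0}.Subsingleton) (hfib : ∀ x, φ x ≠ 0 → k < {y | φ y = φ x}.ncard)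
    (hdiff : ∀ c ≠ 0, ∀ t, {x | φ (x + c) - φ x = t}.ncard ≤ k)
    (hself : ∀ c ≠ 0, {x | φ (x + c) = φ x}.ncard = k) {u v : G} (huv : u ≠ v) :
    {C : Set G | ∃ a β, P β ∧ β ≠ 0 ∧ C = circle φ a β ∧ u ∈ C ∧ v ∈ C}.ncard = k := by
  have hset : {C : Set G | ∃ a β, P β ∧ β ≠ 0 ∧ C = circle φ a β ∧ u ∈ C ∧ v ∈ C} =
      (fun a => circle φ a (φ (u + a))) ''
        {a | φ (u + a) = φ (v + a) ∧ φ (u + a) ≠ 0} := by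
    ext C
    constructor
    · rintro ⟨a, β, -, hβ, rfl, hu, hv⟩
      simp only [circle, Set.mem_ofPred_eq] at hu hv
      exact ⟨a, ⟨hu.trans hv.symm, hu ▸ hβ⟩, congrArg (circle φ a) hu⟩
    · rintro ⟨a, ⟨huv, hne⟩, rfl⟩
      exact ⟨a, _, hP _, hne, rfl, rfl, huv.symm⟩
  rw [hset, ((injOn_circle hfib hdiff u).mono fun a ha => ha.2).ncard_image,
    ncard_setOf_apply_add_eq_apply_add_ne_zero hzero hself huv]

end Circles

theorem stmt13_general (p m q : ℕ) (hp : Nat.Prime p) (hq : q = p ^ m)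
    (K : Type) [Field K] [Fintype K] (hcard : Fintype.card K = q ^ 2)
    (f : K → K)
    (hplanar : ∀ a : K, a ≠ 0 → Function.Bijective (fun x : K => f (x + a) - f x))
    (δ : K) (hδ : δ ≠ 0)
    (φ : K → K) (hφ : ∀ x : K, φ x = δ * f x + (δ * f x) ^ q)
    (hzero : {x : K | φ x = 0}.ncard = 1)
    (hcount : ∀ β : K, β ^ q = β → β ≠ 0 → {x : K | φ x = β}.ncard = q + 1) :
    (∀ a β : K, β ^ q = β → β ≠ 0 → {x : K | φ (x + a) = β}.ncard = q + 1) ∧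
    (∀ u v : K, u ≠ v →
      {a : K | φ (u + a) = φ (v + a) ∧ φ (u + a) ≠ 0}.ncard = q ∧
      {C : Set K | ∃ a β : K, β ^ q = β ∧ β ≠ 0 ∧ C = {x : K | φ (x + a) = β} ∧
        u ∈ C ∧ v ∈ C}.ncard = q) := by
  subst hq
  have : Fact p.Prime := ⟨hp⟩
  have : CharP K p := charP_of_card_eq_prime_pow (hcard.trans (pow_mul p m 2).symm)
  set L := traceMul p m δ
  have hφL : ∀ x, φ x = L (f x) := hφ
  have hker : Nat.card L.ker = p ^ m := card_ker_traceMul hcard hδ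
  have hdiff : ∀ c ≠ 0, ∀ t, {x | φ (x + c) - φ x = t}.ncard ≤ p ^ m := fun c hc t => by
    simp only [hφL, ncard_setOf_map_sub_eq_of_bijective L (hplanar c hc), ← hker]
    exact L.ncard_setOf_eq_le t
  have hker_ncard : {y | L y = 0}.ncard = p ^ m := by
    simpa only [map_zero, hker] using L.ncard_setOf_eq_apply 0
  have hself : ∀ c ≠ 0, {x | φ (x + c) = φ x}.ncard = p ^ m := fun c hc => by
    simpa only [hφL, sub_eq_zero, hker_ncard] using
      ncard_setOf_map_sub_eq_of_bijective L (hplanar c hc) 0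
  have hφF : ∀ x, φ x ^ p ^ m = φ x := fun x => hφL x ▸ traceMul_pow_eq_self hcard δ (f x)
  have hfib : ∀ x, φ x ≠ 0 → p ^ m < {y | φ y = φ x}.ncard := fun x hx => by
    rw [hcount _ (hφF x) hx]
    exact Nat.lt_succ_self _
  have hzero' := Set.ncard_le_one_iff_subsingleton.mp hzero.le
  refine ⟨fun a β hβ hβ0 => (ncard_circle φ a β).trans (hcount β hβ hβ0), fun u v huv =>
    ⟨ncard_setOf_apply_add_eq_apply_add_ne_zero hzero' hself huv,
      ncard_setOf_circle_mem_mem _ hφF hzero' hfib hdiff hself huv⟩⟩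

/-- Corollary 3.8.  Let `f` be planar on `K = F_{q²}`, `δ ≠ 0`, and
`φ(x) = δf(x) + (δf(x))^q`.  Assume `φ⁻¹(0)` is a singleton and every
`β ∈ F \ {0}` has exactly `q+1` preimages under `φ`.  Then each circle
`C_{a,β} = {x : φ(x+a) = β}` has `q+1` points, for any two distinct `u v ∈ K`
there are exactly `q` elements `a` with `φ(u+a) = φ(v+a) ≠ 0`, and any two
distinct points lie on exactly `q` circles: `(K, circles)` is a
`2-(q², q+1, q)` design. -/
theorem stmt13 (p m q : ℕ) (hp : Nat.Prime p) (hpodd : Odd p) (hm : 0 < m) (hq : q = p ^ m)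
    (K : Type) [Field K] [Fintype K] (hcard : Fintype.card K = q ^ 2)
    (f : K → K)
    (hplanar : ∀ a : K, a ≠ 0 → Function.Bijective (fun x : K => f (x + a) - f x))
    (δ : K) (hδ : δ ≠ 0)
    (φ : K → K) (hφ : ∀ x : K, φ x = δ * f x + (δ * f x) ^ q)
    (hzero : {x : K | φ x = 0}.ncard = 1)
    (hcount : ∀ β : K, β ^ q = β → β ≠ 0 → {x : K | φ x = β}.ncard = q + 1) :
    (∀ a β : K, β ^ q = β → β ≠ 0 → {x : K | φ (x + a) = β}.ncard = q + 1) ∧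
    (∀ u v : K, u ≠ v →
      {a : K | φ (u + a) = φ (v + a) ∧ φ (u + a) ≠ 0}.ncard = q ∧
      {C : Set K | ∃ a β : K, β ^ q = β ∧ β ≠ 0 ∧ C = {x : K | φ (x + a) = β} ∧
        u ∈ C ∧ v ∈ C}.ncard = q) :=
  stmt13_general p m q hp hq K hcard f hplanar δ hδ φ hφ hzero hcount
end

section
/- Let q be an odd prime power, K a finite field with q² elements, F its subfield of order q, f : K → K a planar function, and θ ∈ K \ {0}; assume that for all a, b ∈ K the number of x ∈ K with f(x+a) − b ∈ θF is 1 if b ∈ θF and q+1 otherwise, so that U_θ is a unital with blocks B_u (u ∈ K) and B_{a,b} (a ∈ K, b ∈ K \ θF). Then the point (∞) is a vertex of Wilbrink's condition II in strong form in U_θ. Concretely: for every a ∈ K and b ∈ K \ θF, every c ∈ K with f(c+a) − b ∈ θF, and every d ∈ θF with d ≠ f(c+a) − b, the element b′ := f(c+a) − d satisfies b′ ∉ θF, the point (c,d) lies on the block B_{a,b′}, B_{a,b′} ≠ B_c, and for every u ∈ K one has f(u+a) − b ∈ θF if and only if f(u+a) − b′ ∈ θF, so B_{a,b′} meets every block through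 (∞) that meets B_{a,b}. -/
/-- The point set of the unital `U_θ` viewed as a design:
`{(x, tθ) : x ∈ K, t ∈ F} ∪ {(∞)}`, with `(∞)` encoded as `Sum.inr ()`. -/
def unitalPts (K : Type) [Field K] (q : ℕ) (θ : K) : Set ((K × K) ⊕ Unit) :=
  {P | (∃ x t : K, t ^ q = t ∧ P = Sum.inl (x, t * θ)) ∨ P = Sum.inr ()}

/-- The block `B_u = {(u, tθ) : t ∈ F} ∪ {(∞)}` of the unital `U_θ`. -/
def blockInf (K : Type) [Field K] (q : ℕ) (θ : K) (u : K) : Set ((K × K) ⊕ Unit) :=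
  {P | (∃ t : K, t ^ q = t ∧ P = Sum.inl (u, t * θ)) ∨ P = Sum.inr ()}

/-- The block `B_{a,b} = {(x, tθ) : x ∈ K, t ∈ F, f(x+a) − b = tθ}` of `U_θ`. -/
def blockAff (K : Type) [Field K] (q : ℕ) (θ : K) (f : K → K) (a b : K) :
    Set ((K × K) ⊕ Unit) :=
  {P | ∃ x t : K, t ^ q = t ∧ f (x + a) - b = t * θ ∧ P = Sum.inl (x, t * θ)}

/-- The set of all blocks of the unital `U_θ`: the blocks `B_u` through `(∞)` and
the blocks `B_{a,b}` with `b ∉ θF`. -/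
def allBlocks (K : Type) [Field K] (q : ℕ) (θ : K) (f : K → K) :
    Set (Set ((K × K) ⊕ Unit)) :=
  {B | (∃ u : K, B = blockInf K q θ u) ∨
       (∃ a b : K, b ∉ scalarSet K q θ ∧ B = blockAff K q θ f a b)}

/-- Proposition 3.9.  Assume `U_θ` is a unital in `Π(f)` (the stated
counting condition holds).  Then `(∞)` is a vertex of Wilbrink's condition II in
strong form; concretely: for every block `B_{a,b}` (`b ∉ θF`), every `c` with
`f(c+a) − b ∈ θF` (so the block `B_c` through `(∞)` meets `B_{a,b}`), and every
`d ∈ θF` with `d ≠ f(c+a) − b`, the element `b′ = f(c+a) − d` satisfies `b′ ∉ θF`,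
the point `(c,d)` lies on `B_{a,b′}`, `B_{a,b′} ≠ B_c`, and for every `u` one has
`f(u+a) − b ∈ θF ↔ f(u+a) − b′ ∈ θF`, so `B_{a,b′}` meets every block through
`(∞)` that meets `B_{a,b}`. -/
theorem stmt14 (p n q : ℕ) (hp : Nat.Prime p) (hpodd : Odd p) (hn : 0 < n) (hq : q = p ^ n)
    (K : Type) [Field K] [Fintype K] (hcard : Fintype.card K = q ^ 2)
    (f : K → K)
    (hplanar : ∀ a : K, a ≠ 0 → Function.Bijective (fun x : K => f (x + a) - f x))
    (θ : K) (hθ : θ ≠ 0)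
    (hunital : ∀ a b : K,
      (b ∈ scalarSet K q θ → {x : K | f (x + a) - b ∈ scalarSet K q θ}.ncard = 1) ∧
      (b ∉ scalarSet K q θ → {x : K | f (x + a) - b ∈ scalarSet K q θ}.ncard = q + 1)) :
    ∀ a b : K, b ∉ scalarSet K q θ →
    ∀ c : K, f (c + a) - b ∈ scalarSet K q θ →
    ∀ d : K, d ∈ scalarSet K q θ → d ≠ f (c + a) - b →
      (f (c + a) - d) ∉ scalarSet K q θ ∧
      Sum.inl (c, d) ∈ blockAff K q θ f a (f (c + a) - d) ∧
      blockAff K q θ f a (f (c + a) - d) ≠ blockInf K q θ c ∧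
      (∀ u : K,
        f (u + a) - b ∈ scalarSet K q θ ↔
          f (u + a) - (f (c + a) - d) ∈ scalarSet K q θ) ∧
      (∀ u : K, (blockInf K q θ u ∩ blockAff K q θ f a b).Nonempty →
        (blockInf K q θ u ∩ blockAff K q θ f a (f (c + a) - d)).Nonempty) := by
  intro a b hb c hc d hd hdne
  haveI : CharP K (ringChar K) := ringChar.charP K
  have hrp : (ringChar K).Prime := CharP.char_is_prime K (ringChar K)
  obtain ⟨m, hrp', hm⟩ := FiniteField.card K (ringChar K)
  have hpr : p = ringChar K := by
    have : p ∣ ringChar K ^ (m : ℕ) := by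
      rw [← hm, hcard, hq, ← pow_mul]
      exact dvd_pow_self p (by positivity)
    exact ((Nat.prime_dvd_prime_iff_eq hp hrp).1 (hp.prime.dvd_of_dvd_pow this))
  haveI : Fact p.Prime := ⟨hp⟩
  haveI : CharP K p := hpr ▸ ringChar.charP K
  have hqodd : Odd q := by rw [hq]; exact hpodd.pow
  set S := scalarSet K q θ with hS
  have hadd : ∀ x ∈ S, ∀ y ∈ S, x + y ∈ S := by
    rintro x ⟨t, ht, rfl⟩ y ⟨s, hs, rfl⟩
    refine ⟨t + s, ?_, by ring⟩
    rw [hq, add_pow_char_pow, ← hq, ht, hs]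
  have hneg : ∀ x ∈ S, -x ∈ S := by
    rintro x ⟨t, ht, rfl⟩
    exact ⟨-t, by rw [hqodd.neg_pow, ht], by ring⟩
  have hsubm : ∀ x ∈ S, ∀ y ∈ S, x - y ∈ S := fun x hx y hy => by
    rw [sub_eq_add_neg]; exact hadd _ hx _ (hneg _ hy)
  -- b' ∉ S
  have hb' : f (c + a) - d ∉ S := by
    intro h
    apply hb
    have : f (c + a) ∈ S := by
      have := hadd _ h _ hd; simpa using this
    have := hsubm _ this _ hc
    simpa using this
  refine ⟨hb', ?_, ?_, ?_, ?_⟩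
  · obtain ⟨t, ht, rfl⟩ := hd
    exact ⟨c, t, ht, by ring, rfl⟩
  · intro h
    have : Sum.inr () ∈ blockAff K q θ f a (f (c + a) - d) := by
      rw [h]; exact Or.inr rfl
    obtain ⟨x, t, _, _, hcontr⟩ := this
    exact absurd hcontr (by simp)
  · have hbb : b - (f (c + a) - d) ∈ S := by
      have h1 : -(f (c + a) - b) ∈ S := hneg _ hc
      have := hadd _ h1 _ hd
      have h2 : -(f (c + a) - b) + d = b - (f (c + a) - d) := by ring
      rwa [h2] at this
    intro u
    constructor
    · intro h
      have := hadd _ h _ hbb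
      have he : f (u + a) - b + (b - (f (c + a) - d)) = f (u + a) - (f (c + a) - d) := by ring
      rwa [he] at this
    · intro h
      have := hsubm _ h _ hbb
      have he : f (u + a) - (f (c + a) - d) - (b - (f (c + a) - d)) = f (u + a) - b := by ring
      rwa [he] at this
  · rintro u ⟨P, hP1, ⟨x, t, ht, hft, rfl⟩⟩
    have hux : x = u := by
      rcases hP1 with ⟨s, _, heq⟩ | heq
      · exact (Prod.ext_iff.1 (Sum.inl.inj heq)).1
      · exact absurd heq (by simp)
    subst hux
    have huS : f (x + a) - b ∈ S := ⟨t, ht, hft⟩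
    have hbb : b - (f (c + a) - d) ∈ S := by
      have h1 : -(f (c + a) - b) ∈ S := hneg _ hc
      have := hadd _ h1 _ hd
      have h2 : -(f (c + a) - b) + d = b - (f (c + a) - d) := by ring
      rwa [h2] at this
    have h2 : f (x + a) - (f (c + a) - d) ∈ S := by
      have := hadd _ huS _ hbb
      have he : f (x + a) - b + (b - (f (c + a) - d)) = f (x + a) - (f (c + a) - d) := by ring
      rwa [he] at this
    obtain ⟨s, hs, hse⟩ := h2
    exact ⟨Sum.inl (x, s * θ), Or.inl ⟨s, hs, rfl⟩, ⟨x, s, hs, hse, rfl⟩⟩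
end

section
/- Let q be an odd prime power with q > 3, K a finite field with q² elements, F its subfield of order q, f(x) = x², and θ ∈ K \ {0} with θ^{q+1} a nonsquare in F, so that U_θ is a unital in the Desarguesian plane Π(x²). Then (∞) is the unique point of U_θ that is a vertex of Wilbrink's condition II in strong form: a point v of the design U_θ is such a vertex if and only if v = (∞). -/
/-- A point `v` of the unital `U_θ` (as a design) is a vertex of Wilbrink's
condition II in strong form: for every block `B` with `v ∉ B`, every block `C`
containing `v` and meeting `B`, and every point `w ∈ C` with `w ≠ v` and `w ∉ B`,
there is a block `B′ ≠ C` with `w ∈ B′` such that every block containing `v`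
and meeting `B` also meets `B′`. -/
def IsWilbrinkVertex (K : Type) [Field K] (q : ℕ) (θ : K) (f : K → K)
    (v : (K × K) ⊕ Unit) : Prop :=
  ∀ B ∈ allBlocks K q θ f, v ∉ B →
  ∀ C ∈ allBlocks K q θ f, v ∈ C → (B ∩ C).Nonempty →
  ∀ w ∈ C, w ≠ v → w ∉ B →
  ∃ B' ∈ allBlocks K q θ f, B' ≠ C ∧ w ∈ B' ∧
    ∀ D ∈ allBlocks K q θ f, v ∈ D → (D ∩ B).Nonempty → (D ∩ B').Nonempty

lemma memScalar_iff (K : Type) [Field K] (q : ℕ) (θ : K) (hθ : θ ≠ 0) (z : K) :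
    z ∈ scalarSet K q θ ↔ z ^ q * θ = z * θ ^ q := by
  constructor
  · rintro ⟨t, ht, rfl⟩
    rw [mul_pow, ht]; ring
  · intro h
    refine ⟨z / θ, ?_, by field_simp⟩
    rw [div_pow, div_eq_div_iff (pow_ne_zero _ hθ) hθ]
    linear_combination h

/-- a nonzero square is never `t*θ` with `t` in the small field -/
lemma sq_scalar (K : Type) [Field K] (q : ℕ) (θ : K)
    (hpow : ∀ x : K, (x ^ q) ^ q = x)
    (hns : ¬ ∃ s : K, s ^ q = s ∧ s ^ 2 = θ ^ (q + 1))
    (z ω : K) (hω : ω ^ q = ω) (h : z ^ 2 = ω * θ) : z = 0 := by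
  by_contra hz
  have hω0 : ω ≠ 0 := by
    rintro rfl
    exact hz (by simpa [pow_eq_zero_iff] using h)
  refine hns ⟨z ^ (q + 1) / ω, ?_, ?_⟩
  · rw [div_pow, hω]
    congr 1
    rw [pow_succ, mul_pow, hpow]
    ring
  · have hθ' : θ = z ^ 2 / ω := by field_simp; linear_combination -h
    have hω2 : ω ^ (q + 1) = ω ^ 2 := by rw [pow_succ, hω, sq]
    rw [hθ', div_pow, div_pow, hω2, ← pow_mul, ← pow_mul, Nat.mul_comm]

def muOf (K : Type) [Field K] (q : ℕ) (θ σ e : K) : K :=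
  (e + e ^ q) / 2 - 1 + (e - e ^ q) / (2 * σ) * θ

set_option linter.unusedSectionVars false
section MuLemmas

variable (K : Type) [Field K] (q : ℕ) (θ σ : K)
variable (hθ : θ ≠ 0) (hσ : σ ≠ 0) (h2 : (2 : K) ≠ 0)
variable (hσq : σ ^ q = -σ) (h2q : (2 : K) ^ q = 2)
variable (frobq : ∀ x y : K, (x + y) ^ q = x ^ q + y ^ q)
variable (hpow : ∀ x : K, (x ^ q) ^ q = x)
variable (hneg : ∀ x : K, (-x) ^ q = -(x ^ q))
variable (hθqne : θ ^ q ≠ θ)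
variable (hσ2 : σ ^ 2 = θ ^ q * θ)

include frobq hpow h2q h2 hσ hσq hneg

lemma muSD (e : K) :
    ((e + e ^ q) / 2) ^ q = (e + e ^ q) / 2 ∧
    ((e - e ^ q) / (2 * σ)) ^ q = (e - e ^ q) / (2 * σ) ∧
    (e + e ^ q) / 2 + σ * ((e - e ^ q) / (2 * σ)) = e ∧
    (e + e ^ q) / 2 - σ * ((e - e ^ q) / (2 * σ)) = e ^ q := by
  refine ⟨?_, ?_, by field_simp; ring, by field_simp; ring⟩
  · rw [div_pow, frobq, hpow, h2q]; ring
  · rw [div_pow, sub_eq_add_neg, frobq, hneg, hpow, mul_pow, h2q, hσq]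
    rw [div_eq_div_iff (by simpa using ⟨h2, hσ⟩) (by simpa using ⟨h2, hσ⟩)]
    ring

include hθ hσ2

lemma muProp (e : K) (he : e ^ (q + 1) = 1) :
    ((muOf K q θ σ e) ^ 2 + 2 * muOf K q θ σ e) ∈ scalarSet K q θ := by
  obtain ⟨hS, hD, hp, hm⟩ := muSD K q σ hσ h2 hσq h2q frobq hpow hneg e
  set S := (e + e ^ q) / 2 with hSdef
  set D := (e - e ^ q) / (2 * σ) with hDdef
  have hμ : muOf K q θ σ e = S - 1 + D * θ := rfl
  clear_value S D
  clear hSdef hDdef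
  have h3 : e ^ q * e = 1 := by rw [← pow_succ]; exact he
  have hSD : S ^ 2 - (θ ^ q * θ) * D ^ 2 = 1 := by
    rw [← hσ2]
    linear_combination (S - σ * D) * hp + e * hm + h3
  rw [memScalar_iff K q θ hθ]
  have hW : (muOf K q θ σ e) ^ 2 + 2 * muOf K q θ σ e
      = (S ^ 2 - 1) + (2 * S * D) * θ + D ^ 2 * θ ^ 2 := by rw [hμ]; ring
  have hA : (S ^ 2 - 1) ^ q = S ^ 2 - 1 := by
    rw [sub_eq_add_neg, frobq, hneg, one_pow, pow_right_comm, hS]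
  have hB : ((2 * S * D) * θ) ^ q = (2 * S * D) * θ ^ q := by
    rw [mul_pow, mul_pow, mul_pow, h2q, hS, hD]
  have hC : (D ^ 2 * θ ^ 2) ^ q = D ^ 2 * (θ ^ q) ^ 2 := by
    rw [mul_pow, pow_right_comm D, hD, pow_right_comm θ]
  have hWq : ((muOf K q θ σ e) ^ 2 + 2 * muOf K q θ σ e) ^ q
      = (S ^ 2 - 1) + (2 * S * D) * θ ^ q + D ^ 2 * (θ ^ q) ^ 2 := by
    rw [hW, frobq, frobq, hA, hB, hC]
  rw [hWq, hW]
  linear_combination (θ - θ ^ q) * hSD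

include hθqne

lemma muNe0 (e : K) (he1 : e ≠ 1) : muOf K q θ σ e ≠ 0 := by
  obtain ⟨hS, hD, hp, hm⟩ := muSD K q σ hσ h2 hσq h2q frobq hpow hneg e
  set S := (e + e ^ q) / 2 with hSdef
  set D := (e - e ^ q) / (2 * σ) with hDdef
  intro h0
  have hμ : S - 1 + D * θ = 0 := h0
  clear_value S D
  clear hSdef hDdef
  by_cases hDz : D = 0
  · rw [hDz] at hμ hp
    have hS1 : S = 1 := by linear_combination hμ
    rw [hS1] at hp
    simp at hp
    exact he1 hp.symm
  · apply hθqne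
    have hθval : θ = (1 - S) / D := by
      rw [eq_div_iff hDz]
      linear_combination hμ
    rw [hθval, div_pow, sub_eq_add_neg, frobq, one_pow, hneg, hS, hD]

lemma muInj (e e' : K) (heq : muOf K q θ σ e = muOf K q θ σ e') : e = e' := by
  obtain ⟨hS, hD, hp, hm⟩ := muSD K q σ hσ h2 hσq h2q frobq hpow hneg e
  obtain ⟨hS', hD', hp', hm'⟩ := muSD K q σ hσ h2 hσq h2q frobq hpow hneg e'
  set S := (e + e ^ q) / 2 with hSdef
  set D := (e - e ^ q) / (2 * σ) with hDdef
  set S' := (e' + e' ^ q) / 2 with hS'def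
  set D' := (e' - e' ^ q) / (2 * σ) with hD'def
  have hμ : S - 1 + D * θ = S' - 1 + D' * θ := heq
  clear_value S D S' D'
  clear hSdef hDdef hS'def hD'def
  by_cases hDD : D = D'
  · have hSS : S = S' := by rw [hDD] at hμ; linear_combination hμ
    rw [← hp, ← hp', hSS, hDD]
  · exfalso
    apply hθqne
    have hθval : θ = (S' - S) / (D - D') := by
      rw [eq_div_iff (sub_ne_zero.mpr hDD)]
      linear_combination hμ
    rw [hθval, div_pow, sub_eq_add_neg, frobq, hneg, hS, hS', sub_eq_add_neg, frobq, hneg, hD, hD']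

end MuLemmas


section Main

set_option linter.unusedSectionVars false
set_option maxHeartbeats 1000000

/-- Theorem 3.10.  For `q > 3` odd, `f(x) = x²` and `θ ≠ 0` with
`θ^{q+1}` a nonsquare in the subfield `F` of order `q`, the point `(∞)` is the
unique vertex of Wilbrink's condition II in strong form of the unital `U_θ` in
the Desarguesian plane `Π(x²)`. -/
theorem stmt15 (p n q : ℕ) (hp : Nat.Prime p) (hpodd : Odd p) (hn : 0 < n) (hq : q = p ^ n)
    (hq3 : 3 < q)
    (K : Type) [Field K] [Fintype K] (hcard : Fintype.card K = q ^ 2)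
    (θ : K) (hθ : θ ≠ 0)
    (hns : ¬ ∃ s : K, s ^ q = s ∧ s ^ 2 = θ ^ (q + 1)) :
    ∀ v ∈ unitalPts K q θ,
      (IsWilbrinkVertex K q θ (fun x : K => x ^ 2) v ↔ v = Sum.inr ()) := by
  have hqodd : Odd q := hq ▸ hpodd.pow
  have hq5 : 5 ≤ q := by obtain ⟨k, hk⟩ := hqodd; omega
  have hcharp : CharP K p := by
    obtain ⟨m, hrp, hrc⟩ := FiniteField.card K (ringChar K)
    have hd : p ∣ ringChar K := by
      have h1 : p ∣ Fintype.card K := by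
        rw [hcard, hq, ← pow_mul]
        exact dvd_pow_self p (by positivity)
      rw [hrc] at h1
      exact hp.prime.dvd_of_dvd_pow h1
    exact ((Nat.prime_dvd_prime_iff_eq hp hrp).mp hd) ▸ ringChar.charP K
  haveI : Fact p.Prime := ⟨hp⟩
  haveI := hcharp
  have frobq : ∀ x y : K, (x + y) ^ q = x ^ q + y ^ q := by
    intro x y; rw [hq]; exact add_pow_char_pow x y p n
  have hpow : ∀ x : K, (x ^ q) ^ q = x := by
    intro x
    rw [← pow_mul, show q * q = Fintype.card K by rw [hcard]; ring]
    exact FiniteField.pow_card x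
  have hnegq : ∀ x : K, (-x) ^ q = -(x ^ q) := fun x => Odd.neg_pow hqodd x
  have h2q : (2 : K) ^ q = 2 := by
    have h := frobq 1 1; norm_num at h; exact h
  have h2ne : (2 : K) ≠ 0 := by
    intro h
    have h2 : ((2 : ℕ) : K) = 0 := by exact_mod_cast h
    have hdvd := (CharP.cast_eq_zero_iff K p 2).mp h2
    have hp2 : p = 2 := (Nat.prime_dvd_prime_iff_eq hp Nat.prime_two).mp hdvd
    obtain ⟨k, hk⟩ := hpodd; omega
  have hθqne : θ ^ q ≠ θ := fun h => hns ⟨θ, h, by rw [pow_succ θ q, h, sq]⟩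
  have hffix : ∀ x y : K, x ^ q = x → y ^ q = y → (x - y) ^ q = x - y := by
    intro x y hx hy; rw [sub_eq_add_neg, frobq, hnegq, hx, hy]
  have haddfix : ∀ x y : K, x ^ q = x → y ^ q = y → (x + y) ^ q = x + y := by
    intro x y hx hy; rw [frobq, hx, hy]
  have hν0 : θ ^ (q + 1) ≠ 0 := pow_ne_zero _ hθ
  have hνfix : (θ ^ (q + 1)) ^ q = θ ^ (q + 1) := by
    rw [pow_succ, mul_pow, hpow]; ring
  have hν1 : (θ ^ (q + 1)) ^ (q - 1) = 1 := by
    have h3 : (θ ^ (q + 1)) ^ (q - 1) * (θ ^ (q + 1)) = (θ ^ (q + 1)) ^ q := by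
      rw [← pow_succ]; congr 1; omega
    rw [hνfix] at h3
    exact mul_right_cancel₀ hν0 (by rw [h3, one_mul])
  have hsq2 : IsSquare (θ ^ (q + 1)) := by
    obtain ⟨k, hk⟩ := hqodd
    have hchar2 : ringChar K ≠ 2 := by
      rw [ringChar.eq K p]
      obtain ⟨k', hk'⟩ := hpodd; omega
    rw [FiniteField.isSquare_iff hchar2 hν0, hcard]
    have hm : q ^ 2 = 4 * (k * k + k) + 1 := by subst hk; ring
    have key : ∀ s m : ℕ, s = 4 * m + 1 → s / 2 = 2 * m := by intro s m h; omega
    have h1 := key _ _ hm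
    have h2 : (q - 1) * (k + 1) = 2 * (k * k + k) := by
      have hq1 : q - 1 = 2 * k := by omega
      rw [hq1]; ring
    rw [h1, ← h2, pow_mul, hν1, one_pow]
  obtain ⟨σ, hσdef⟩ := hsq2
  have hσν : σ ^ 2 = θ ^ (q + 1) := by rw [sq]; exact hσdef.symm
  have hσ2 : σ ^ 2 = θ ^ q * θ := by rw [hσν, pow_succ]
  have hσ0 : σ ≠ 0 := by
    intro h; rw [h] at hσdef; simp at hσdef; exact hθ hσdef
  have hσq : σ ^ q = -σ := by
    have hsqq : σ ^ q * σ ^ q = σ * σ := by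
      have : (σ ^ q) ^ 2 = (σ ^ 2) ^ q := pow_right_comm σ q 2
      rw [hσν, hνfix, ← hσν] at this
      rw [← sq, ← sq]; exact this
    rcases mul_self_eq_mul_self_iff.mp hsqq with h | h
    · exact absurd (hns ⟨σ, h, hσν⟩) (fun hf => hf)
    · exact h
  intro v hv
  rcases hv with ⟨x₀, t₀, ht₀, rfl⟩ | rfl
  · -- affine point : NOT a vertex
    constructor
    · intro hvert
      exfalso
      -- NOT-vertex proof for affine point v = (x₀, t₀θ)
      have hbB : (1 - (t₀ + 1) * θ) ∉ scalarSet K q θ := by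
        rintro ⟨t, ht, hEq⟩
        have h1 : (1 : K) ^ 2 = (t + t₀ + 1) * θ := by linear_combination hEq
        exact one_ne_zero
          (sq_scalar K q θ hpow hns 1 (t + t₀ + 1)
            (haddfix _ _ (haddfix _ _ ht ht₀) (one_pow q)) h1)
      have hBmem : blockAff K q θ (fun x : K => x ^ 2) (1 - x₀) (1 - (t₀ + 1) * θ)
          ∈ allBlocks K q θ (fun x : K => x ^ 2) := Or.inr ⟨_, _, hbB, rfl⟩
      have hvB : Sum.inl (x₀, t₀ * θ) ∉
          blockAff K q θ (fun x : K => x ^ 2) (1 - x₀) (1 - (t₀ + 1) * θ) := by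
        rintro ⟨x, t, ht, hEq, hPt⟩
        simp only [Sum.inl.injEq, Prod.mk.injEq] at hPt
        obtain ⟨rfl, h2'⟩ := hPt
        apply hθ
        have hEq' : (x₀ + (1 - x₀)) ^ 2 - (1 - (t₀ + 1) * θ) = t * θ := hEq
        linear_combination hEq' - h2'
      have hCmem : blockInf K q θ x₀ ∈ allBlocks K q θ (fun x : K => x ^ 2) :=
        Or.inl ⟨x₀, rfl⟩
      have hvC : Sum.inl (x₀, t₀ * θ) ∈ blockInf K q θ x₀ := Or.inl ⟨t₀, ht₀, rfl⟩
      have ht01 : (t₀ + 1) ^ q = t₀ + 1 := haddfix _ _ ht₀ (one_pow q)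
      have hBC : (blockAff K q θ (fun x : K => x ^ 2) (1 - x₀) (1 - (t₀ + 1) * θ)
          ∩ blockInf K q θ x₀).Nonempty := by
        refine ⟨Sum.inl (x₀, (t₀ + 1) * θ),
          ⟨x₀, t₀ + 1, ht01, by show (x₀ + (1 - x₀)) ^ 2 - _ = _; ring, rfl⟩,
          Or.inl ⟨t₀ + 1, ht01, rfl⟩⟩
      obtain ⟨B', hB'mem, hB'ne, hwB', hB'prop⟩ :=
        hvert _ hBmem hvB _ hCmem hvC hBC (Sum.inr ()) (Or.inr rfl) (by simp)
          (by rintro ⟨_, _, _, _, hpt⟩; simp at hpt)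
      rcases hB'mem with ⟨u', rfl⟩ | ⟨a'', b'', hb'', rfl⟩
      swap
      · obtain ⟨_, _, _, _, hpt⟩ := hwB'; simp at hpt
      have hu' : u' ≠ x₀ := fun h => hB'ne (by rw [h])
      have hδ0 : u' - x₀ ≠ 0 := sub_ne_zero.mpr hu'
      set δ := u' - x₀ with hδdef
      clear_value δ
      -- generator and the five elements
      classical
      obtain ⟨g, hg⟩ := IsCyclic.exists_generator (α := Kˣ)
      have horder : orderOf g = q ^ 2 - 1 := by
        rw [orderOf_eq_card_of_forall_mem_zpowers hg, Nat.card_eq_fintype_card,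
          Fintype.card_units, hcard]
      have hq21 : (q - 1) * (q + 1) = q ^ 2 - 1 := by
        have h1 : 1 ≤ q := by omega
        zify [h1, show 1 ≤ q ^ 2 from Nat.one_le_pow _ _ (by omega)]
        ring
      have hE : ∀ i : ℕ, (((g ^ (i * (q - 1)) : Kˣ) : K)) ^ (q + 1) = 1 := by
        intro i
        have h1 : (g ^ (i * (q - 1))) ^ (q + 1) = 1 := by
          rw [← pow_mul, ← orderOf_dvd_iff_pow_eq_one, horder, mul_assoc, hq21]
          exact dvd_mul_left _ _
        have := congrArg (Units.val) h1
        simpa using this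
      have hbound : ∀ i : ℕ, i ≤ 5 → i * (q - 1) < orderOf g := by
        intro i hi
        rw [horder, ← hq21]
        have h6 : i * (q - 1) ≤ 5 * (q - 1) := Nat.mul_le_mul_right _ hi
        have h7 : 5 * (q - 1) < (q + 1) * (q - 1) :=
          mul_lt_mul_of_pos_right (by omega) (by omega)
        have hc : (q - 1) * (q + 1) = (q + 1) * (q - 1) := Nat.mul_comm _ _
        omega
      have hEne1 : ∀ i : ℕ, 1 ≤ i → i ≤ 5 → ((g ^ (i * (q - 1)) : Kˣ) : K) ≠ 1 := by
        intro i h1 h5 hEq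
        have hu : (g ^ (i * (q - 1)) : Kˣ) = 1 := Units.val_eq_one.mp hEq
        have hdvd : orderOf g ∣ i * (q - 1) := orderOf_dvd_iff_pow_eq_one.mpr hu
        have hle := Nat.le_of_dvd (Nat.mul_pos (by omega) (by omega)) hdvd
        have := hbound i h5
        omega
      have hEinj : ∀ i j : ℕ, i ≤ 5 → j ≤ 5 → i ≠ j →
          ((g ^ (i * (q - 1)) : Kˣ) : K) ≠ ((g ^ (j * (q - 1)) : Kˣ) : K) := by
        intro i j hi hj hij hEq
        have hu : (g ^ (i * (q - 1)) : Kˣ) = g ^ (j * (q - 1)) := Units.ext hEq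
        have := pow_injOn_Iio_orderOf (Set.mem_Iio.mpr (hbound i hi))
          (Set.mem_Iio.mpr (hbound j hj)) hu
        exact hij (Nat.eq_of_mul_eq_mul_right (by omega) this)
      set μs : ℕ → K := fun i => muOf K q θ σ ((g ^ (i * (q - 1)) : Kˣ) : K) with hμsdef
      have hμ0 : ∀ i : ℕ, 1 ≤ i → i ≤ 5 → μs i ≠ 0 := fun i h1 h5 =>
        muNe0 K q θ σ hθ hσ0 h2ne hσq h2q frobq hpow hnegq hθqne hσ2 _ (hEne1 i h1 h5)
      have hμmem : ∀ i : ℕ, ((μs i) ^ 2 + 2 * μs i) ∈ scalarSet K q θ := fun i =>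
        muProp K q θ σ hθ hσ0 h2ne hσq h2q frobq hpow hnegq hσ2 _ (hE i)
      have hμinj : ∀ i j : ℕ, i ≤ 5 → j ≤ 5 → i ≠ j → μs i ≠ μs j := fun i j hi hj hij h =>
        hEinj i j hi hj hij
          (muInj K q θ σ hθ hσ0 h2ne hσq h2q frobq hpow hnegq hθqne hσ2 _ _ h)
      -- key equation from the vertex property
      have hKey : ∀ i : ℕ, 1 ≤ i → i ≤ 5 → ∃ s : K, s ^ q = s ∧
          (δ ^ 2 + 2 * δ) * μs i + δ * θ = s * θ * μs i := by
        intro i h1 h5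
        have hμne : μs i ≠ 0 := hμ0 i h1 h5
        obtain ⟨τ, hτ, hτeq⟩ := hμmem i
        set μ := μs i with hμdef
        have hbD : ((1 + θ / (2 * μ)) ^ 2 - t₀ * θ) ∉ scalarSet K q θ := by
          rintro ⟨t, ht, hEq⟩
          have hzero : (1 + θ / (2 * μ)) = 0 := by
            apply sq_scalar K q θ hpow hns _ (t + t₀) (haddfix _ _ ht ht₀)
            linear_combination hEq
          have hθμ : θ = -(2 * μ) := by
            field_simp at hzero
            linear_combination hzero
          have hμval : μ + 2 = -(2 * τ) := by
            apply mul_left_cancel₀ hμne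
            linear_combination hτeq + τ * hθμ
          apply hθqne
          have hθ4 : θ = 4 * τ + 4 := by linear_combination hθμ - 2 * hμval
          have h4q : (4 : K) ^ q = 4 := by
            rw [show (4 : K) = 2 * 2 by norm_num, mul_pow, h2q]
          rw [hθ4, frobq, mul_pow, h4q, hτ]
        have hDmem : blockAff K q θ (fun x : K => x ^ 2) (1 - x₀ + θ / (2 * μ))
            ((1 + θ / (2 * μ)) ^ 2 - t₀ * θ) ∈ allBlocks K q θ (fun x : K => x ^ 2) :=
          Or.inr ⟨_, _, hbD, rfl⟩
        have hvD : Sum.inl (x₀, t₀ * θ) ∈ blockAff K q θ (fun x : K => x ^ 2)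
            (1 - x₀ + θ / (2 * μ)) ((1 + θ / (2 * μ)) ^ 2 - t₀ * θ) :=
          ⟨x₀, t₀, ht₀, by show (x₀ + (1 - x₀ + θ / (2 * μ))) ^ 2 - _ = _; ring, rfl⟩
        have hτfix : (τ + t₀ + 1) ^ q = τ + t₀ + 1 :=
          haddfix _ _ (haddfix _ _ hτ ht₀) (one_pow q)
        have hDB : (blockAff K q θ (fun x : K => x ^ 2) (1 - x₀ + θ / (2 * μ))
            ((1 + θ / (2 * μ)) ^ 2 - t₀ * θ) ∩
            blockAff K q θ (fun x : K => x ^ 2) (1 - x₀) (1 - (t₀ + 1) * θ)).Nonempty := by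
          refine ⟨Sum.inl (x₀ + μ, (τ + t₀ + 1) * θ),
            ⟨x₀ + μ, τ + t₀ + 1, hτfix, ?_, rfl⟩,
            ⟨x₀ + μ, τ + t₀ + 1, hτfix, ?_, rfl⟩⟩
          · show (x₀ + μ + (1 - x₀ + θ / (2 * μ))) ^ 2 - _ = _
            field_simp
            ring_nf
            linear_combination (4 * μ ^ 2) * hτeq
          · show (x₀ + μ + (1 - x₀)) ^ 2 - _ = _
            linear_combination hτeq
        obtain ⟨P, hPD, hPB'⟩ := hB'prop _ hDmem hvD hDB
        obtain ⟨x, t, ht, htEq, rfl⟩ := hPD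
        rcases hPB' with ⟨t'', ht'', hpt⟩ | hpt
        swap
        · simp at hpt
        have hxu : x = u' := by
          simp only [Sum.inl.injEq, Prod.mk.injEq] at hpt
          exact hpt.1
        rw [hxu] at htEq
        refine ⟨t - t₀, hffix _ _ ht ht₀, ?_⟩
        have hu'val : u' = x₀ + δ := by rw [hδdef]; ring
        rw [hu'val] at htEq
        have htEq' : (x₀ + δ + (1 - x₀ + θ / (2 * μ))) ^ 2
            - ((1 + θ / (2 * μ)) ^ 2 - t₀ * θ) = t * θ := htEq
        field_simp at htEq'
        have h4ne : (4 : K) * μ ≠ 0 :=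
          mul_ne_zero (by rw [show (4 : K) = 2 * 2 by norm_num]; exact mul_ne_zero h2ne h2ne) hμne
        apply mul_left_cancel₀ h4ne
        linear_combination htEq'
      -- conjugated key relation
      set νN := θ ^ q * θ with hνNdef
      have hνNne : νN ≠ 0 := mul_ne_zero (pow_ne_zero _ hθ) hθ
      set gg := δ ^ 2 + 2 * δ with hggdef
      set α := gg ^ q * θ - gg * θ ^ q with hαdef
      have hEE : ∀ i : ℕ, 1 ≤ i → i ≤ 5 →
          α * (μs i * (μs i) ^ q) + νN * (δ ^ q * μs i - δ * (μs i) ^ q) = 0 := by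
        intro i h1 h5
        obtain ⟨s, hs, hKi⟩ := hKey i h1 h5
        have hKiq : gg ^ q * (μs i) ^ q + δ ^ q * θ ^ q = s * θ ^ q * (μs i) ^ q := by
          have hcong := congrArg (· ^ q) hKi
          rw [frobq, mul_pow, mul_pow, mul_pow, mul_pow, hs] at hcong
          linear_combination hcong
        rw [hαdef, hνNdef]
        linear_combination (θ * μs i) * hKiq - (θ ^ q * (μs i) ^ q) * hKi
      by_cases hα : α = 0
      · -- linear case
        obtain ⟨τ₁, hτ₁, hτeq₁⟩ := hμmem 1
        obtain ⟨τ₂, hτ₂, hτeq₂⟩ := hμmem 2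
        have rel : ∀ i : ℕ, 1 ≤ i → i ≤ 5 → δ ^ q * μs i = δ * (μs i) ^ q := by
          intro i h1 h5
          have h := hEE i h1 h5
          rw [hα] at h
          simp only [zero_mul, zero_add] at h
          rcases mul_eq_zero.mp h with h' | h'
          · exact absurd h' hνNne
          · linear_combination h'
        have rel1 := rel 1 (by norm_num) (by norm_num)
        have rel2 := rel 2 (by norm_num) (by norm_num)
        have hμ1ne := hμ0 1 (by norm_num) (by norm_num)
        have hμ2ne := hμ0 2 (by norm_num) (by norm_num)
        have hδqne : δ ^ q ≠ 0 := pow_ne_zero _ hδ0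
        set lam1 := μs 1 / δ with hlam1def
        set lam2 := μs 2 / δ with hlam2def
        have hlam1fix : lam1 ^ q = lam1 := by
          rw [hlam1def, div_pow, div_eq_div_iff hδqne hδ0]
          linear_combination -rel1
        have hlam2fix : lam2 ^ q = lam2 := by
          rw [hlam2def, div_pow, div_eq_div_iff hδqne hδ0]
          linear_combination -rel2
        have hlam10 : lam1 ≠ 0 := div_ne_zero hμ1ne hδ0
        have hlam20 : lam2 ≠ 0 := div_ne_zero hμ2ne hδ0
        have hlamne : lam1 ≠ lam2 := by
          intro h
          rw [hlam1def, hlam2def, div_eq_div_iff hδ0 hδ0] at h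
          exact hμinj 1 2 (by norm_num) (by norm_num) (by norm_num)
            (mul_right_cancel₀ hδ0 h)
        have hμ1val : μs 1 = lam1 * δ := by rw [hlam1def]; field_simp
        have hμ2val : μs 2 = lam2 * δ := by rw [hlam2def]; field_simp
        clear_value lam1 lam2
        have hA1 : lam1 * δ ^ 2 + 2 * δ = (τ₁ / lam1) * θ := by
          rw [div_mul_eq_mul_div, eq_div_iff hlam10]
          rw [hμ1val] at hτeq₁
          linear_combination hτeq₁
        have hA2 : lam2 * δ ^ 2 + 2 * δ = (τ₂ / lam2) * θ := by
          rw [div_mul_eq_mul_div, eq_div_iff hlam20]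
          rw [hμ2val] at hτeq₂
          linear_combination hτeq₂
        set ω := (τ₁ / lam1 - τ₂ / lam2) / (lam1 - lam2) with hωdef
        have hωfix : ω ^ q = ω := by
          rw [hωdef, div_pow,
            hffix _ _ (by rw [div_pow, hτ₁, hlam1fix]) (by rw [div_pow, hτ₂, hlam2fix]),
            hffix _ _ hlam1fix hlam2fix]
        have hδ2 : δ ^ 2 = ω * θ := by
          rw [hωdef, div_mul_eq_mul_div, eq_div_iff (sub_ne_zero.mpr hlamne)]
          linear_combination hA1 - hA2
        exact hδ0 (sq_scalar K q θ hpow hns δ ω hωfix hδ2)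
      · -- polynomial case
        have hconj : ∀ i : ℕ, θ * (((μs i) ^ q) ^ 2 + 2 * (μs i) ^ q)
            = ((μs i) ^ 2 + 2 * μs i) * θ ^ q := by
          intro i
          obtain ⟨τ, hτ, hτeq⟩ := hμmem i
          have hh1 : ((μs i) ^ 2 + 2 * μs i) ^ q = τ * θ ^ q := by
            rw [hτeq, mul_pow, hτ]
          have hh2 : ((μs i) ^ 2 + 2 * μs i) ^ q = ((μs i) ^ q) ^ 2 + 2 * (μs i) ^ q := by
            rw [frobq, mul_pow, h2q, pow_right_comm]
          rw [hh2] at hh1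
          linear_combination θ * hh1 - θ ^ q * hτeq
        have h1rel : ∀ i : ℕ, 1 ≤ i → i ≤ 5 →
            (μs i) ^ q * (α * μs i - νN * δ) = -(νN * δ ^ q * μs i) := by
          intro i h1 h5
          linear_combination hEE i h1 h5
        set c4 := -(θ ^ q * α ^ 2) with hc4def
        set c3 := 2 * θ ^ q * α * νN * δ - 2 * θ ^ q * α ^ 2 with hc3def
        set c2 := θ * νN ^ 2 * δ ^ q * δ ^ q - 2 * θ * νN * α * δ ^ q
          - θ ^ q * νN ^ 2 * δ ^ 2 + 4 * θ ^ q * α * νN * δ with hc2def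
        set c1 := 2 * θ * νN ^ 2 * δ ^ q * δ - 2 * θ ^ q * νN ^ 2 * δ ^ 2 with hc1def
        set R : Polynomial K := Polynomial.C c4 * Polynomial.X ^ 4
          + Polynomial.C c3 * Polynomial.X ^ 3
          + Polynomial.C c2 * Polynomial.X ^ 2 + Polynomial.C c1 * Polynomial.X with hRdef
        have hRdeg : R.natDegree ≤ 4 := by
          rw [hRdef]; compute_degree
        have hRc4 : R.coeff 4 = c4 := by
          rw [hRdef]
          simp [Polynomial.coeff_add, Polynomial.coeff_C_mul, Polynomial.coeff_X_pow,
            Polynomial.coeff_X]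
        have hc4ne : c4 ≠ 0 := by
          rw [hc4def]
          exact neg_ne_zero.mpr (mul_ne_zero (pow_ne_zero _ hθ) (pow_ne_zero _ hα))
        have hR0 : R ≠ 0 := fun h => hc4ne (by rw [← hRc4, h, Polynomial.coeff_zero])
        have hRroot : ∀ i : ℕ, 1 ≤ i → i ≤ 5 → Polynomial.eval (μs i) R = 0 := by
          intro i h1 h5
          rw [hRdef]
          simp only [Polynomial.eval_add, Polynomial.eval_mul, Polynomial.eval_pow,
            Polynomial.eval_C, Polynomial.eval_X]
          rw [hc4def, hc3def, hc2def, hc1def]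
          linear_combination ((α * μs i - νN * δ) ^ 2) * hconj i
            + (θ * (νN * δ ^ q * μs i - (μs i) ^ q * (α * μs i - νN * δ)
              - 2 * (α * μs i - νN * δ))) * h1rel i h1 h5
        have hsub : ({μs 1, μs 2, μs 3, μs 4, μs 5} : Finset K) ⊆ R.roots.toFinset := by
          intro x hx
          rw [Multiset.mem_toFinset, Polynomial.mem_roots']
          simp only [Finset.mem_insert, Finset.mem_singleton] at hx
          rcases hx with rfl | rfl | rfl | rfl | rfl
          · exact ⟨hR0, hRroot 1 (by norm_num) (by norm_num)⟩
          · exact ⟨hR0, hRroot 2 (by norm_num) (by norm_num)⟩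
          · exact ⟨hR0, hRroot 3 (by norm_num) (by norm_num)⟩
          · exact ⟨hR0, hRroot 4 (by norm_num) (by norm_num)⟩
          · exact ⟨hR0, hRroot 5 (by norm_num) (by norm_num)⟩
        have hd12 := hμinj 1 2 (by norm_num) (by norm_num) (by norm_num)
        have hd13 := hμinj 1 3 (by norm_num) (by norm_num) (by norm_num)
        have hd14 := hμinj 1 4 (by norm_num) (by norm_num) (by norm_num)
        have hd15 := hμinj 1 5 (by norm_num) (by norm_num) (by norm_num)
        have hd23 := hμinj 2 3 (by norm_num) (by norm_num) (by norm_num)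
        have hd24 := hμinj 2 4 (by norm_num) (by norm_num) (by norm_num)
        have hd25 := hμinj 2 5 (by norm_num) (by norm_num) (by norm_num)
        have hd34 := hμinj 3 4 (by norm_num) (by norm_num) (by norm_num)
        have hd35 := hμinj 3 5 (by norm_num) (by norm_num) (by norm_num)
        have hd45 := hμinj 4 5 (by norm_num) (by norm_num) (by norm_num)
        have hcard5 : ({μs 1, μs 2, μs 3, μs 4, μs 5} : Finset K).card = 5 := by
          rw [Finset.card_insert_of_notMem (by simp [hd12, hd13, hd14, hd15]),
            Finset.card_insert_of_notMem (by simp [hd23, hd24, hd25]),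
            Finset.card_insert_of_notMem (by simp [hd34, hd35]),
            Finset.card_insert_of_notMem (by simp [hd45]),
            Finset.card_singleton]
        have hfinal : (5 : ℕ) ≤ R.natDegree :=
          hcard5 ▸ le_trans (le_trans (Finset.card_le_card hsub)
            (Multiset.toFinset_card_le _)) (Polynomial.card_roots' R)
        omega
    · intro h; simp at h
  · -- (∞) IS a vertex
    refine ⟨fun _ => rfl, fun _ => ?_⟩
    intro B hB hvB C hC hvC hBC w hwC hwv hwB
    rcases hB with ⟨u0, rfl⟩ | ⟨a, b, hbθ, rfl⟩
    · exact absurd (Or.inr rfl) hvB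
    rcases hC with ⟨u, rfl⟩ | ⟨a', b', hb', rfl⟩
    swap
    · obtain ⟨x, t, ht, heq, hPt⟩ := hvC; simp at hPt
    obtain ⟨P, hPB, hPC⟩ := hBC
    obtain ⟨x, s, hs, hsEq, rfl⟩ := hPB
    rcases hPC with ⟨t', ht', hPt⟩ | hPt
    swap
    · simp at hPt
    have hxu : x = u := by
      simp only [Sum.inl.injEq, Prod.mk.injEq] at hPt
      exact hPt.1
    subst hxu
    rcases hwC with ⟨tw, htw, rfl⟩ | rfl
    swap
    · exact absurd rfl hwv
    have hswθ : s * θ ≠ tw * θ := by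
      intro h
      exact hwB ⟨x, s, hs, hsEq, by rw [h]⟩
    refine ⟨blockAff K q θ (fun x : K => x ^ 2) a (b + s * θ - tw * θ),
      Or.inr ⟨a, _, ?_, rfl⟩, ?_, ?_, ?_⟩
    · rintro ⟨t, ht, hEq⟩
      exact hbθ ⟨t - s + tw, haddfix _ _ (hffix _ _ ht hs) htw, by linear_combination hEq⟩
    · intro hBC'
      have h8 : Sum.inr () ∈ blockAff K q θ (fun x : K => x ^ 2) a (b + s * θ - tw * θ) :=
        hBC' ▸ (Or.inr rfl)
      obtain ⟨_, _, _, _, hpt⟩ := h8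
      simp at hpt
    · exact ⟨x, tw, htw, by show (x + a) ^ 2 - _ = _; linear_combination hsEq, rfl⟩
    · intro D hD hvD hDB
      rcases hD with ⟨u'', rfl⟩ | ⟨a'', b'', hb'', rfl⟩
      swap
      · obtain ⟨_, _, _, _, hpt⟩ := hvD; simp at hpt
      obtain ⟨P, hPD, hPB2⟩ := hDB
      obtain ⟨x', tD, htD, hEqD, rfl⟩ := hPB2
      rcases hPD with ⟨t'', ht'', hpt⟩ | hpt
      swap
      · simp at hpt
      have hxu' : x' = u'' := by
        simp only [Sum.inl.injEq, Prod.mk.injEq] at hpt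
        exact hpt.1
      subst hxu'
      refine ⟨Sum.inl (x', (tD - s + tw) * θ),
        Or.inl ⟨tD - s + tw, haddfix _ _ (hffix _ _ htD hs) htw, rfl⟩,
        x', tD - s + tw, haddfix _ _ (hffix _ _ htD hs) htw,
        by show (x' + a) ^ 2 - _ = _; linear_combination hEqD, rfl⟩

end Main
end

section
/- Let p be an odd prime, n a positive integer, q = pⁿ, and K a finite field with q² = p^{2n} elements with F its subfield of order q. Let f(x) = x², or f(x) = x^{p^k+1} where 1 ≤ k ≤ n and 2n/gcd(2n,k) is odd. Let θ ∈ K \ {0} with θ^{q+1} a nonsquare in F. Then the unital U_θ in Π(f) contains an O'Nan configuration: there exist four distinct blocks of U_θ, any two of which intersect, whose six pairwise intersection points are pairwise distinct (no three of the four blocks pass through a common point). -/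
/-!
Write `f x = σ x * x` with `σ = (x ↦ x ^ p ^ k)`. Some odd iterate `σ^[m]` is the identity, which
makes `f` planar: `f (x + c) = f (x - c)` with `c ≠ 0` forces `x = 0`, since `u = x / c` satisfies
`σ u = -u` and hence `u = σ^[m] u = -u`. For the same reason `w ↦ w + σ w` is onto, so some `c`
has `c + σ c = 1 - θ / 2`, i.e. `f (c - 1) - f c = θ / 2`. The blocks `B_{±c, f c}` then meet
only in `(0, 0)`, the blocks `B_{±(c - 1), f (c - 1) - θ}` only in `(0, θ)`, and each block of
the first pair meets each block of the second at height `θ / 2`. These are blocks because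
`f z = z ^ (p ^ k + 1)` is a square, and a nonzero square in `θF` would make `θ ^ (q + 1)` a
square in `F`.
-/

def IsONanConfiguration {α : Type*} (B₁ B₂ B₃ B₄ : Set α) : Prop :=
  B₁ ≠ B₂ ∧ B₁ ≠ B₃ ∧ B₁ ≠ B₄ ∧ B₂ ≠ B₃ ∧ B₂ ≠ B₄ ∧ B₃ ≠ B₄ ∧
    (B₁ ∩ B₂).Nonempty ∧ (B₁ ∩ B₃).Nonempty ∧ (B₁ ∩ B₄).Nonempty ∧
    (B₂ ∩ B₃).Nonempty ∧ (B₂ ∩ B₄).Nonempty ∧ (B₃ ∩ B₄).Nonempty ∧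
    B₁ ∩ B₂ ∩ B₃ = ∅ ∧ B₁ ∩ B₂ ∩ B₄ = ∅ ∧ B₁ ∩ B₃ ∩ B₄ = ∅ ∧ B₂ ∩ B₃ ∩ B₄ = ∅

theorem IsONanConfiguration.of_inter_subset_singleton {α : Type*} {B₁ B₂ B₃ B₄ : Set α}
    {P Q : α} (hP : P ∈ B₁ ∩ B₂) (hQ : Q ∈ B₃ ∩ B₄) (h₁₂ : B₁ ∩ B₂ ⊆ {P})
    (h₃₄ : B₃ ∩ B₄ ⊆ {Q}) (hP₃ : P ∉ B₃) (hP₄ : P ∉ B₄) (hQ₁ : Q ∉ B₁) (hQ₂ : Q ∉ B₂)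
    (h₁₃ : (B₁ ∩ B₃).Nonempty) (h₁₄ : (B₁ ∩ B₄).Nonempty) (h₂₃ : (B₂ ∩ B₃).Nonempty)
    (h₂₄ : (B₂ ∩ B₄).Nonempty) :
    IsONanConfiguration B₁ B₂ B₃ B₄ := by
  refine ⟨?_, fun h => hP₃ (h ▸ hP.1), fun h => hP₄ (h ▸ hP.1), fun h => hP₃ (h ▸ hP.2),
    fun h => hP₄ (h ▸ hP.2), ?_, ⟨P, hP⟩, h₁₃, h₁₄, h₂₃, h₂₄, ⟨Q, hQ⟩, ?_, ?_, ?_, ?_⟩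
  · rintro rfl
    obtain ⟨x, hx₁, hx₃⟩ := h₁₃
    exact hP₃ (h₁₂ ⟨hx₁, hx₁⟩ ▸ hx₃)
  · rintro rfl
    obtain ⟨x, hx₁, hx₃⟩ := h₁₃
    exact hQ₁ (h₃₄ ⟨hx₃, hx₃⟩ ▸ hx₁)
  · exact Set.eq_empty_of_forall_notMem fun x ⟨hx, hx₃⟩ => hP₃ (h₁₂ hx ▸ hx₃)
  · exact Set.eq_empty_of_forall_notMem fun x ⟨hx, hx₄⟩ => hP₄ (h₁₂ hx ▸ hx₄)
  · exact Set.eq_empty_of_forall_notMem fun x ⟨⟨hx₁, hx₃⟩, hx₄⟩ => hQ₁ (h₃₄ ⟨hx₃, hx₄⟩ ▸ hx₁)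
  · exact Set.eq_empty_of_forall_notMem fun x ⟨⟨hx₂, hx₃⟩, hx₄⟩ => hQ₂ (h₃₄ ⟨hx₃, hx₄⟩ ▸ hx₂)

section OddIterate

variable {K : Type*} [Field K] {σ : K →+* K} {m : ℕ}

theorem eq_zero_of_map_eq_neg (hm : Odd m) (hσ : ∀ x, σ^[m] x = x) (h2 : (2 : K) ≠ 0)
    {u : K} (hu : σ u = -u) : u = 0 := by
  have hiter : ∀ i, σ^[i] u = (-1) ^ i * u := by
    intro i
    induction i with
    | zero => simp
    | succ i ih =>
      rw [Function.iterate_succ_apply', ih, map_mul, map_pow, map_neg, map_one, hu, pow_succ]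
      ring
  have h := hσ u
  rw [hiter, hm.neg_one_pow] at h
  exact (mul_eq_zero.1 (by linear_combination -h : (2 : K) * u = 0)).resolve_left h2

theorem eq_zero_of_map_mul_self_add_eq (hm : Odd m) (hσ : ∀ x, σ^[m] x = x) (h2 : (2 : K) ≠ 0)
    {x c : K} (hc : c ≠ 0) (h : σ (x + c) * (x + c) = σ (x - c) * (x - c)) : x = 0 := by
  have hσc : σ c ≠ 0 := (map_ne_zero σ).2 hc
  have hpolar : 2 * (σ x * c + σ c * x) = 0 := by
    rw [map_add, map_sub] at h
    linear_combination h
  have hu : σ (x / c) = -(x / c) := by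
    rw [map_div₀, ← neg_div, div_eq_div_iff hσc hc]
    linear_combination (mul_eq_zero.1 hpolar).resolve_left h2
  simpa [hc] using eq_zero_of_map_eq_neg hm hσ h2 hu

theorem exists_add_map_eq (hm : Odd m) (hσ : ∀ x, σ^[m] x = x) (h2 : (2 : K) ≠ 0) (y : K) :
    ∃ w, w + σ w = y := by
  set a : ℕ → K := fun i => (-1) ^ i * σ^[i] y
  have hshift : ∀ i, σ (a i) = -a (i + 1) := fun i => by
    simp only [a, map_mul, map_pow, map_neg, map_one, Function.iterate_succ_apply', pow_succ]
    ring
  have htelescope : ∑ i ∈ Finset.range m, a i + σ (∑ i ∈ Finset.range m, a i) = 2 * y := by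
    rw [map_sum, ← Finset.sum_add_distrib]
    simp only [hshift, ← sub_eq_add_neg]
    rw [Finset.sum_range_sub']
    simp only [a, pow_zero, Function.iterate_zero_apply, hσ, hm.neg_one_pow]
    ring
  refine ⟨2⁻¹ * ∑ i ∈ Finset.range m, a i, ?_⟩
  rw [map_mul, map_inv₀, map_ofNat, ← mul_add, htelescope, inv_mul_cancel_left₀ h2]

end OddIterate

section Unital

variable {K : Type} [Field K] {q : ℕ} {θ : K}

theorem inl_mem_blockAff {f : K → K} {a b x y : K} :
    Sum.inl (x, y) ∈ blockAff K q θ f a b ↔ y ∈ scalarSet K q θ ∧ f (x + a) - b = y := by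
  constructor
  · rintro ⟨x', t, ht, h, hP⟩
    obtain ⟨rfl, rfl⟩ := Prod.mk.inj (Sum.inl_injective hP)
    exact ⟨⟨t, ht, rfl⟩, h⟩
  · rintro ⟨⟨t, ht, rfl⟩, h⟩
    exact ⟨x, t, ht, h, rfl⟩

theorem inr_notMem_blockAff {f : K → K} {a b : K} : Sum.inr () ∉ blockAff K q θ f a b := by
  rintro ⟨_, _, _, _, ⟨⟩⟩

theorem blockAff_inter_blockAff_neg_subset {σ : K →+* K} {m : ℕ} (hm : Odd m)
    (hσ : ∀ x, σ^[m] x = x) (h2 : (2 : K) ≠ 0) {f : K → K} (hf : ∀ x, f x = σ x * x)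
    {d e : K} (hd : d ≠ 0) :
    blockAff K q θ f d e ∩ blockAff K q θ f (-d) e ⊆ {Sum.inl (0, f d - e)} := by
  rintro (⟨x, y⟩ | ⟨⟩) ⟨h₁, h₂⟩
  · rw [inl_mem_blockAff] at h₁ h₂
    obtain rfl : x = 0 := eq_zero_of_map_mul_self_add_eq hm hσ h2 hd <| by
      rw [← hf, ← hf, sub_eq_add_neg]
      linear_combination h₁.2 - h₂.2
    rw [← h₁.2, zero_add]
    rfl
  · exact absurd h₁ inr_notMem_blockAff

theorem exists_sq_eq_pow_succ_of_sq_eq_mul [Fintype K] (hcard : Fintype.card K = q ^ 2)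
    {s t : K} (ht : t ^ q = t) (ht0 : t ≠ 0) (hs : s ^ 2 = t * θ) :
    ∃ r : K, r ^ q = r ∧ r ^ 2 = θ ^ (q + 1) := by
  refine ⟨s ^ (q + 1) / t, ?_, ?_⟩
  · rw [div_pow, ht, ← pow_mul, add_mul, one_mul, ← sq, pow_add, ← hcard,
      FiniteField.pow_card, mul_comm, ← pow_succ]
  · have htq : t ^ (q + 1) = t ^ 2 := by rw [pow_succ, ht, sq]
    rw [div_pow, ← pow_mul, mul_comm, pow_mul, hs, mul_pow, htq]
    field_simp

theorem eq_zero_of_pow_mem_scalarSet [Fintype K] (hcard : Fintype.card K = q ^ 2)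
    (hns : ¬ ∃ s : K, s ^ q = s ∧ s ^ 2 = θ ^ (q + 1)) {e : ℕ} (he : Even e) (he0 : e ≠ 0)
    {z : K} (hz : z ^ e ∈ scalarSet K q θ) : z = 0 := by
  obtain ⟨t, ht, hzt⟩ := hz
  by_contra hz
  obtain ⟨s, hs⟩ := he.isSquare_pow z
  have ht0 : t ≠ 0 := by
    rintro rfl
    exact hz (pow_eq_zero_iff he0 |>.1 (hzt.trans (zero_mul θ)))
  exact hns (exists_sq_eq_pow_succ_of_sq_eq_mul hcard ht ht0 (by rw [sq, ← hs, hzt]))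

theorem mul_mem_scalarSet {φ : K →+* K} (hφ : ∀ x, φ x = x ^ q) {t : K} (ht : φ t = t) :
    t * θ ∈ scalarSet K q θ :=
  ⟨t, (hφ t).symm.trans ht, rfl⟩

theorem isONanConfiguration_blockAff {φ σ : K →+* K} (hφ : ∀ x, φ x = x ^ q) {m : ℕ}
    (hm : Odd m) (hσ : ∀ x, σ^[m] x = x) (h2 : (2 : K) ≠ 0) (hθ : θ ≠ 0) {f : K → K}
    (hf : ∀ x, f x = σ x * x) {c : K} (hc : c + σ c = 1 - 2⁻¹ * θ) (hc0 : c ≠ 0)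
    (hc1 : c - 1 ≠ 0) :
    IsONanConfiguration (blockAff K q θ f c (f c)) (blockAff K q θ f (-c) (f c))
      (blockAff K q θ f (c - 1) (f (c - 1) - θ))
      (blockAff K q θ f (-(c - 1)) (f (c - 1) - θ)) := by
  have h0 : (0 : K) ∈ scalarSet K q θ := by simpa using mul_mem_scalarSet hφ (map_zero φ)
  have hθF : θ ∈ scalarSet K q θ := by simpa using mul_mem_scalarSet hφ (map_one φ)
  have hηF : 2⁻¹ * θ ∈ scalarSet K q θ := mul_mem_scalarSet hφ (by rw [map_inv₀, map_ofNat])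
  have hneg : ∀ x, f (-x) = f x := fun x => by rw [hf, hf, map_neg, neg_mul_neg]
  have hkey : f (c - 1) - f c = 2⁻¹ * θ := by
    rw [hf, hf, map_sub, map_one]
    linear_combination -hc
  have mem₁₂ : ∀ {x a}, f (x + a) = f (c - 1) →
      Sum.inl (x, 2⁻¹ * θ) ∈ blockAff K q θ f a (f c) :=
    fun h => inl_mem_blockAff.2 ⟨hηF, by rw [h, hkey]⟩
  have mem₃₄ : ∀ {x a}, f (x + a) = f c →
      Sum.inl (x, 2⁻¹ * θ) ∈ blockAff K q θ f a (f (c - 1) - θ) :=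
    fun h => inl_mem_blockAff.2 ⟨hηF, by rw [h]; linear_combination -hkey - θ * mul_inv_cancel₀ h2⟩
  refine IsONanConfiguration.of_inter_subset_singleton (P := Sum.inl (0, 0)) (Q := Sum.inl (0, θ))
    ⟨inl_mem_blockAff.2 ⟨h0, by rw [zero_add, sub_self]⟩,
      inl_mem_blockAff.2 ⟨h0, by rw [zero_add, hneg, sub_self]⟩⟩
    ⟨inl_mem_blockAff.2 ⟨hθF, by rw [zero_add, sub_sub_cancel]⟩,
      inl_mem_blockAff.2 ⟨hθF, by rw [zero_add, hneg, sub_sub_cancel]⟩⟩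
    (by simpa only [sub_self] using
      blockAff_inter_blockAff_neg_subset (q := q) (θ := θ) (e := f c) hm hσ h2 hf hc0)
    (by simpa only [sub_sub_cancel] using
      blockAff_inter_blockAff_neg_subset (q := q) (θ := θ) (e := f (c - 1) - θ) hm hσ h2 hf hc1)
    ?_ ?_ ?_ ?_
    ⟨_, mem₁₂ (x := 1 - 2 * c) (by rw [show 1 - 2 * c + c = -(c - 1) by ring, hneg]),
      mem₃₄ (by rw [show 1 - 2 * c + (c - 1) = -c by ring, hneg])⟩
    ⟨_, mem₁₂ (x := -1) (by rw [neg_add_eq_sub]),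
      mem₃₄ (by rw [show -1 + -(c - 1) = -c by ring, hneg])⟩
    ⟨_, mem₁₂ (x := 1) (by rw [show 1 + -c = -(c - 1) by ring, hneg]),
      mem₃₄ (by rw [add_sub_cancel])⟩
    ⟨_, mem₁₂ (x := 2 * c - 1) (by rw [show 2 * c - 1 + -c = c - 1 by ring]),
      mem₃₄ (by rw [show 2 * c - 1 + -(c - 1) = c by ring])⟩
  all_goals
    intro h
    have h := (inl_mem_blockAff.1 h).2
    rw [zero_add] at h
  · exact hθ (by linear_combination h)
  · exact hθ (by rw [hneg] at h; linear_combination h)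
  · exact hθ (by linear_combination -h)
  · exact hθ (by rw [hneg] at h; linear_combination -h)

theorem exists_isONanConfiguration (φ σ : K →+* K) (hφ : ∀ x, φ x = x ^ q) {m : ℕ}
    (hm : Odd m) (hσ : ∀ x, σ^[m] x = x) (h2 : (2 : K) ≠ 0) (hθ : θ ≠ 0) {f : K → K}
    (hf : ∀ x, f x = σ x * x) (hsq : ∀ z, f z ∈ scalarSet K q θ → z = 0) :
    ∃ B₁ B₂ B₃ B₄ : Set ((K × K) ⊕ Unit),
      B₁ ∈ allBlocks K q θ f ∧ B₂ ∈ allBlocks K q θ f ∧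
      B₃ ∈ allBlocks K q θ f ∧ B₄ ∈ allBlocks K q θ f ∧ IsONanConfiguration B₁ B₂ B₃ B₄ := by
  have hone : (1 : K) ∉ scalarSet K q θ := fun h =>
    one_ne_zero (hsq 1 (by rwa [hf, map_one, one_mul]))
  obtain ⟨c, hc⟩ := exists_add_map_eq hm hσ h2 (1 - 2⁻¹ * θ)
  have hc0 : c ≠ 0 := by
    rintro rfl
    rw [map_zero] at hc
    exact hone ((by linear_combination hc : 2⁻¹ * θ = 1) ▸
      mul_mem_scalarSet hφ (by rw [map_inv₀, map_ofNat]))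
  have hc1 : c - 1 ≠ 0 := by
    intro h
    obtain rfl : c = 1 := sub_eq_zero.1 h
    rw [map_one] at hc
    exact hone ((by linear_combination -hc : -2⁻¹ * θ = 1) ▸
      mul_mem_scalarSet hφ (by rw [map_neg, map_inv₀, map_ofNat]))
  have hb : f c ∉ scalarSet K q θ := fun h => hc0 (hsq c h)
  have hb' : f (c - 1) - θ ∉ scalarSet K q θ := by
    rintro ⟨t, ht, h⟩
    exact hc1 (hsq _ ⟨t + 1, by rw [← hφ, map_add, map_one, hφ, ht], by linear_combination h⟩)
  exact ⟨_, _, _, _, Or.inr ⟨c, _, hb, rfl⟩, Or.inr ⟨-c, _, hb, rfl⟩,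
    Or.inr ⟨c - 1, _, hb', rfl⟩, Or.inr ⟨-(c - 1), _, hb', rfl⟩,
    isONanConfiguration_blockAff hφ hm hσ h2 hθ hf hc hc0 hc1⟩

end Unital

theorem iterate_iterateFrobenius_eq_self {K : Type*} [Field K] [Fintype K] {p N k m : ℕ}
    [Fact p.Prime] [CharP K p] (hcard : Fintype.card K = p ^ N) (hN : N ∣ k * m) (x : K) :
    (iterateFrobenius K p k)^[m] x = x := by
  obtain ⟨t, ht⟩ := hN
  rw [← iterateFrobenius_mul_apply, iterateFrobenius_def, ht, pow_mul, ← hcard,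
    FiniteField.pow_card_pow]

theorem exists_odd_dvd_of_eq_pow_pow_succ {K : Type*} [Field K] {p n : ℕ} {f : K → K}
    (hf : (f = fun x : K => x ^ 2) ∨
      ∃ k : ℕ, 1 ≤ k ∧ k ≤ n ∧ Odd (2 * n / Nat.gcd (2 * n) k) ∧
        f = fun x : K => x ^ (p ^ k + 1)) :
    ∃ k m, Odd m ∧ 2 * n ∣ k * m ∧ f = fun x : K => x ^ (p ^ k + 1) := by
  rcases hf with rfl | ⟨k, -, -, hodd, rfl⟩
  · exact ⟨0, 1, odd_one, dvd_zero _, by norm_num⟩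
  · refine ⟨k, _, hodd, ?_, rfl⟩
    rw [← Nat.mul_div_assoc _ (Nat.gcd_dvd_left _ _), mul_comm k, ← Nat.lcm_eq_mul_div]
    exact Nat.dvd_lcm_left _ _

theorem stmt16_general (p n q : ℕ) (hp : Nat.Prime p) (hpodd : Odd p) (hq : q = p ^ n)
    (K : Type) [Field K] [Fintype K] (hcard : Fintype.card K = q ^ 2)
    (f : K → K)
    (hf : (f = fun x : K => x ^ 2) ∨
      ∃ k : ℕ, 1 ≤ k ∧ k ≤ n ∧ Odd (2 * n / Nat.gcd (2 * n) k) ∧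
        f = fun x : K => x ^ (p ^ k + 1))
    (θ : K) (hθ : θ ≠ 0)
    (hns : ¬ ∃ s : K, s ^ q = s ∧ s ^ 2 = θ ^ (q + 1)) :
    ∃ B1 B2 B3 B4 : Set ((K × K) ⊕ Unit),
      B1 ∈ allBlocks K q θ f ∧ B2 ∈ allBlocks K q θ f ∧
      B3 ∈ allBlocks K q θ f ∧ B4 ∈ allBlocks K q θ f ∧
      B1 ≠ B2 ∧ B1 ≠ B3 ∧ B1 ≠ B4 ∧ B2 ≠ B3 ∧ B2 ≠ B4 ∧ B3 ≠ B4 ∧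
      (B1 ∩ B2).Nonempty ∧ (B1 ∩ B3).Nonempty ∧ (B1 ∩ B4).Nonempty ∧
      (B2 ∩ B3).Nonempty ∧ (B2 ∩ B4).Nonempty ∧ (B3 ∩ B4).Nonempty ∧
      B1 ∩ B2 ∩ B3 = ∅ ∧ B1 ∩ B2 ∩ B4 = ∅ ∧ B1 ∩ B3 ∩ B4 = ∅ ∧ B2 ∩ B3 ∩ B4 = ∅ := by
  subst hq
  obtain ⟨k, m, hm, hkm, rfl⟩ := exists_odd_dvd_of_eq_pow_pow_succ hf
  have : Fact p.Prime := ⟨hp⟩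
  have hcard' : Fintype.card K = p ^ (2 * n) := by rw [hcard, ← pow_mul, mul_comm]
  have : CharP K p := charP_of_card_eq_prime_pow hcard'
  have h2 : (2 : K) ≠ 0 := Ring.two_ne_zero <| by
    rw [ringChar.eq K p]
    rintro rfl
    exact Nat.not_odd_iff_even.2 even_two hpodd
  obtain ⟨B₁, B₂, B₃, B₄, h₁, h₂, h₃, h₄, hB⟩ :=
    exists_isONanConfiguration (iterateFrobenius K p n) (iterateFrobenius K p k)
      (fun _ => iterateFrobenius_def ..) hm (iterate_iterateFrobenius_eq_self hcard' hkm) h2 hθ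
      (fun x => pow_succ x _)
      (fun _ => eq_zero_of_pow_mem_scalarSet hcard hns hpodd.pow.add_one (Nat.succ_ne_zero _))
  exact ⟨B₁, B₂, B₃, B₄, h₁, h₂, h₃, h₄, hB⟩

/-- Theorem 3.13.  Let `q = pⁿ` be odd, `f(x) = x²` or
`f(x) = x^{p^k+1}` with `1 ≤ k ≤ n` and `2n/gcd(2n,k)` odd, and `θ ≠ 0` with
`θ^{q+1}` a nonsquare in the subfield `F` of order `q`.  Then the unital `U_θ`
in `Π(f)` contains an O'Nan configuration: four distinct blocks, any two of
which meet, such that no three of them pass through a common point (so the six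
pairwise intersection points are pairwise distinct). -/
theorem stmt16 (p n q : ℕ) (hp : Nat.Prime p) (hpodd : Odd p) (hn : 0 < n) (hq : q = p ^ n)
    (K : Type) [Field K] [Fintype K] (hcard : Fintype.card K = q ^ 2)
    (f : K → K)
    (hf : (f = fun x : K => x ^ 2) ∨
      ∃ k : ℕ, 1 ≤ k ∧ k ≤ n ∧ Odd (2 * n / Nat.gcd (2 * n) k) ∧
        f = fun x : K => x ^ (p ^ k + 1))
    (θ : K) (hθ : θ ≠ 0)
    (hns : ¬ ∃ s : K, s ^ q = s ∧ s ^ 2 = θ ^ (q + 1)) :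
    ∃ B1 B2 B3 B4 : Set ((K × K) ⊕ Unit),
      B1 ∈ allBlocks K q θ f ∧ B2 ∈ allBlocks K q θ f ∧
      B3 ∈ allBlocks K q θ f ∧ B4 ∈ allBlocks K q θ f ∧
      B1 ≠ B2 ∧ B1 ≠ B3 ∧ B1 ≠ B4 ∧ B2 ≠ B3 ∧ B2 ≠ B4 ∧ B3 ≠ B4 ∧
      (B1 ∩ B2).Nonempty ∧ (B1 ∩ B3).Nonempty ∧ (B1 ∩ B4).Nonempty ∧
      (B2 ∩ B3).Nonempty ∧ (B2 ∩ B4).Nonempty ∧ (B3 ∩ B4).Nonempty ∧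
      B1 ∩ B2 ∩ B3 = ∅ ∧ B1 ∩ B2 ∩ B4 = ∅ ∧ B1 ∩ B3 ∩ B4 = ∅ ∧ B2 ∩ B3 ∩ B4 = ∅ :=
  stmt16_general p n q hp hpodd hq K hcard f hf θ hθ hns
end

section
/- Let q be an odd prime power, K a finite field with q² elements, F its subfield of order q, and f : K → K a planar function given by a Dembowski–Ostrom polynomial; set x*y := (f(x+y) − f(x) − f(y))/2 and ς_{u,v,w}(x,y) := (x+u, y + 2(w*x) − v). Let θ ∈ K \ {0} and let κ : K → K (written x ↦ x̄) be additive with κ∘κ = id, κ∘f = f∘κ, and exactly q elements y satisfying y + ȳ = f(x + x̄) for each x ∈ K. Set A_θ = {(x, tθ) : x ∈ K, t ∈ F} and U = {(x,y) ∈ K × K : y + ȳ = f(x + x̄)}. Then: (i) ς_{u,v,w} maps A_θ onto itself if and only if w = 0 and v ∈ θF, and the q³ maps ς_{u,v,0} with v ∈ θF form an abelian group under composition; (ii) ς_{u,v,w} maps U onto itself if and only if w = u + ū and f(u + ū) = −(v + v̄), and there are exactly q³ such triples' maps. -/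
open Function Polynomial
open QuadraticMap (polar polar_comm)

theorem ncard_prod_setOf_of_ncard_fibers {α β : Type*} [Fintype α] [Finite β]
    (C : α → β → Prop) {m : ℕ} (h : ∀ a, {b | C a b}.ncard = m) :
    {P : α × β | C P.1 P.2}.ncard = Fintype.card α * m := by
  rw [← Nat.card_coe_set_eq]
  calc Nat.card {P : α × β // C P.1 P.2}
      = Nat.card (Σ a, {b // C a b}) := Nat.card_congr (Equiv.subtypeProdEquivSigmaSubtype C)
    _ = ∑ a, Nat.card {b // C a b} := Nat.card_sigma
    _ = ∑ _a : α, m :=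
      Finset.sum_congr rfl fun a _ => (Nat.card_coe_set_eq {b | C a b}).trans (h a)
    _ = Fintype.card α * m := by simp

/-- `X ^ q - X` divides `X ^ q² - X`, which splits in `K`, and it is separable. -/
theorem ncard_setOf_pow_eq_self {K : Type*} [Field K] [Fintype K] {p n : ℕ} [Fact p.Prime]
    [CharP K p] (hn : n ≠ 0) (hcard : Fintype.card K = (p ^ n) ^ 2) :
    {t : K | t ^ p ^ n = t}.ncard = p ^ n := by
  have hq : 1 < p ^ n := Nat.one_lt_pow hn (Fact.out : p.Prime).one_lt
  have hdvd : (X ^ p ^ n - X : K[X]) ∣ X ^ Fintype.card K - X := by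
    have : (X ^ Fintype.card K - X : K[X]) = (X ^ p ^ n - X) ^ p ^ n + (X ^ p ^ n - X) := by
      rw [sub_pow_char_pow, ← pow_mul, hcard, pow_two]; ring
    rw [this]
    exact (dvd_pow_self _ (by omega)).add dvd_rfl
  have hsplit : Splits ((X ^ p ^ n - X : K[X]).map (algebraMap K K)) := by
    have h := (FiniteField.isSplittingField_sub K K).splits'
    rw [Algebra.algebraMap_self, Polynomial.map_id] at h ⊢
    exact h.of_dvd (FiniteField.X_pow_card_sub_X_ne_zero K Fintype.one_lt_card) hdvd
  have hroots := card_rootSet_eq_natDegree (galois_poly_separable p _ (dvd_pow_self p hn)) hsplit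
  rw [FiniteField.X_pow_card_sub_X_natDegree_eq K hq] at hroots
  have hset : (X ^ p ^ n - X : K[X]).rootSet K = {t : K | t ^ p ^ n = t} := by
    ext t
    simp [mem_rootSet, sub_eq_zero, FiniteField.X_pow_card_sub_X_ne_zero K hq]
  rw [← hset, ← Nat.card_coe_set_eq, Nat.card_eq_fintype_card, hroots]

def scalarAddSubgroup (K : Type*) [Field K] (p n : ℕ) [ExpChar K p] (θ : K) : AddSubgroup K :=
  ((iterateFrobenius K p n).eqLocusField (RingHom.id K)).toAddSubgroup.map
    (AddMonoidHom.mulRight θ)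

theorem coe_scalarAddSubgroup (K : Type) [Field K] (p n : ℕ) [ExpChar K p] (θ : K) :
    (scalarAddSubgroup K p n θ : Set K) = scalarSet K (p ^ n) θ := by
  ext c
  simp [scalarAddSubgroup, scalarSet, RingHom.mem_eqLocusField, iterateFrobenius_def, eq_comm]

theorem setOf_exists_eq_mk_mul (K : Type) [Field K] (p n : ℕ) [ExpChar K p] (θ : K) :
    {P : K × K | ∃ x t : K, t ^ p ^ n = t ∧ P = (x, t * θ)}
      = {P | P.2 ∈ scalarAddSubgroup K p n θ} := by
  ext ⟨x, y⟩
  simp [← SetLike.mem_coe, coe_scalarAddSubgroup, scalarSet]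

section Card

variable {K : Type} [Field K] [Fintype K] {p n : ℕ} [Fact p.Prime] [CharP K p] {θ : K}

theorem ncard_scalarSet (hn : n ≠ 0) (hcard : Fintype.card K = (p ^ n) ^ 2) (hθ : θ ≠ 0) :
    (scalarSet K (p ^ n) θ).ncard = p ^ n := by
  have : scalarSet K (p ^ n) θ = (· * θ) '' {t | t ^ p ^ n = t} := by
    ext c; simp [scalarSet, eq_comm]
  rw [this, Set.ncard_image_of_injective _ (mul_left_injective₀ hθ),
    ncard_setOf_pow_eq_self hn hcard]

theorem scalarAddSubgroup_ne_top (hn : n ≠ 0) (hcard : Fintype.card K = (p ^ n) ^ 2)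
    (hθ : θ ≠ 0) : scalarAddSubgroup K p n θ ≠ ⊤ := by
  intro h
  have hS := ncard_scalarSet hn hcard hθ
  rw [← coe_scalarAddSubgroup, h, AddSubgroup.coe_top, Set.ncard_univ, Nat.card_eq_fintype_card,
    hcard] at hS
  exact (lt_self_pow₀ (Nat.one_lt_pow hn (Fact.out : p.Prime).one_lt) one_lt_two).ne' hS

end Card

section DembowskiOstrom

variable {K : Type*} [CommRing K] {p : ℕ} [Fact p.Prime] {f : K → K}
  {s : Finset (ℕ × ℕ)} {c : ℕ × ℕ → K}

theorem polar_add_left_of_dembowskiOstrom [CharP K p]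
    (hf : ∀ x, f x = ∑ ij ∈ s, c ij * x ^ (p ^ ij.1 + p ^ ij.2)) (x x' y : K) :
    polar f (x + x') y = polar f x y + polar f x' y := by
  simp only [polar, hf, ← Finset.sum_sub_distrib, ← Finset.sum_add_distrib]
  refine Finset.sum_congr rfl fun ij _ => ?_
  simp only [pow_add, add_pow_char_pow]
  ring

theorem map_zero_of_dembowskiOstrom
    (hf : ∀ x, f x = ∑ ij ∈ s, c ij * x ^ (p ^ ij.1 + p ^ ij.2)) : f 0 = 0 := by
  rw [hf]
  exact Finset.sum_eq_zero fun ij _ => by rw [zero_pow (Nat.pos_of_neZero _).ne', mul_zero]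

end DembowskiOstrom

section Polar

variable {G : Type*} [AddCommGroup G] {f : G → G}

def polarAddHom (f : G → G) (hf : ∀ x x' y, polar f (x + x') y = polar f x y + polar f x' y) :
    G →+ G →+ G :=
  AddMonoidHom.mk' (fun x => AddMonoidHom.mk' (polar f x) fun y y' => by
      simp only [polar_comm f x, hf])
    fun x x' => by ext y; exact hf x x' y

theorem bijective_polar (hplanar : ∀ a, a ≠ 0 → Bijective fun x => f (x + a) - f x) {w : G}
    (hw : w ≠ 0) : Bijective (polar f w) := by
  have : polar f w = (· - f w) ∘ fun x => f (x + w) - f x := by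
    ext x; simp only [polar, comp_apply, add_comm w]; abel
  rw [this]
  exact (Equiv.subRight (f w)).bijective.comp (hplanar w hw)

theorem map_polar_of_comm (κ : G →+ G) (hcomm : ∀ x, κ (f x) = f (κ x)) (x y : G) :
    κ (polar f x y) = polar f (κ x) (κ y) := by
  simp only [polar, map_sub, map_add, hcomm]

end Polar

section Shear

variable {G : Type*} [AddCommGroup G] {f : G → G}

/-- The collineation `ς_{u,v,w}`, with `2 (w * x) = polar f w x`. -/
def shear (f : G → G) (u v w : G) (P : G × G) : G × G :=
  (P.1 + u, P.2 + polar f w P.1 - v)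

theorem shear_injective (f : G → G) (u v w : G) : Injective (shear f u v w) := by
  rintro ⟨x, y⟩ ⟨x', y'⟩ h
  simp only [shear, Prod.mk.injEq] at h
  obtain rfl : x = x' := add_right_cancel h.1
  simpa using h.2

theorem shear_zero (hf0 : f 0 = 0) (u v : G) (P : G × G) :
    shear f u v 0 P = (P.1 + u, P.2 - v) := by
  simp [shear, polar, hf0]

theorem shear_zero_comp_shear_zero (hf0 : f 0 = 0) (u v u' v' : G) :
    shear f u v 0 ∘ shear f u' v' 0 = shear f (u + u') (v + v') 0 := by
  ext P <;> simp only [comp_apply, shear_zero hf0] <;> abel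

theorem ncard_setOf_shear [Fintype G] (W : G → G) (C : G → G → Prop) {m : ℕ}
    (h : ∀ u, {v | C u v}.ncard = m) :
    {g | ∃ u v, C u v ∧ g = shear f u v (W u)}.ncard = Fintype.card G * m := by
  have hinj : Injective fun P : G × G => shear f P.1 P.2 (W P.1) := by
    rintro ⟨u, v⟩ ⟨u', v'⟩ h
    have h0 := congrFun h (0, 0)
    simp only [shear, Prod.mk.injEq] at h0
    obtain rfl : u = u' := by simpa using h0.1
    simpa using h0.2
  rw [← ncard_prod_setOf_of_ncard_fibers C h, ← Set.ncard_image_of_injective _ hinj]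
  congr 1
  ext g
  simp [eq_comm]

theorem shear_image_setOf_snd_mem_eq_iff (S : AddSubgroup G) (u v w : G) :
    shear f u v w '' {P | P.2 ∈ S} = {P | P.2 ∈ S} ↔ ∀ x, polar f w x - v ∈ S := by
  constructor
  · intro h x
    have : shear f u v w (x, 0) ∈ {P : G × G | P.2 ∈ S} := h ▸ ⟨(x, 0), S.zero_mem, rfl⟩
    simpa [shear, add_sub_assoc] using this
  · intro h
    ext P
    constructor
    · rintro ⟨⟨x', y'⟩, hy', rfl⟩
      simpa [shear, add_sub_assoc] using S.add_mem hy' (h x')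
    · obtain ⟨x, y⟩ := P
      intro hy
      refine ⟨(x - u, y - (polar f w (x - u) - v)), S.sub_mem hy (h _), ?_⟩
      simp only [shear, Prod.mk.injEq]
      constructor <;> abel

theorem forall_polar_sub_mem_iff (hf0 : f 0 = 0)
    (hplanar : ∀ a, a ≠ 0 → Bijective fun x => f (x + a) - f x) {S : AddSubgroup G}
    (hS : S ≠ ⊤) {v w : G} : (∀ x, polar f w x - v ∈ S) ↔ w = 0 ∧ v ∈ S := by
  constructor
  · intro h
    have hv : v ∈ S := by simpa [polar, hf0] using h 0
    refine ⟨?_, hv⟩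
    by_contra hw
    refine hS (eq_top_iff.mpr fun z _ => ?_)
    obtain ⟨x, hx⟩ := (bijective_polar hplanar hw).surjective (z + v)
    simpa [hx] using h x
  · rintro ⟨rfl, hv⟩ x
    simpa [polar, hf0] using hv

end Shear

section Unital

variable {G : Type*} [AddCommGroup G] {f : G → G}

def unitalPoints (f : G → G) (κ : G →+ G) : Set (G × G) :=
  {P | P.2 + κ P.2 = f (P.1 + κ P.1)}

theorem shear_mem_unitalPoints_iff (κ : G →+ G) (hcomm : ∀ x, κ (f x) = f (κ x))
    {u v w x y : G} (hxy : (x, y) ∈ unitalPoints f κ) :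
    shear f u v w (x, y) ∈ unitalPoints f κ ↔
      polar f w x + polar f (κ w) (κ x) - (v + κ v)
        = f (u + κ u) + polar f (u + κ u) (x + κ x) := by
  have h1 : y + polar f w x - v + κ (y + polar f w x - v)
      = (y + κ y) + (polar f w x + polar f (κ w) (κ x) - (v + κ v)) := by
    rw [map_sub, map_add, map_polar_of_comm κ hcomm]; abel
  have h2 : x + u + κ (x + u) = (x + κ x) + (u + κ u) := by rw [map_add]; abel
  simp only [unitalPoints, Set.mem_ofPred_eq, shear] at hxy ⊢
  rw [h1, h2, QuadraticMap.map_add f, hxy, add_assoc, add_right_inj, polar_comm f (x + κ x)]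

theorem shear_image_unitalPoints_eq_iff [Finite G] (κ : G →+ G)
    (hcomm : ∀ x, κ (f x) = f (κ x))
    (hne : ∀ x, {y | y + κ y = f (x + κ x)}.Nonempty) {u v w : G} :
    shear f u v w '' unitalPoints f κ = unitalPoints f κ ↔
      ∀ x, polar f w x + polar f (κ w) (κ x) - (v + κ v)
        = f (u + κ u) + polar f (u + κ u) (x + κ x) := by
  have hmaps : shear f u v w '' unitalPoints f κ = unitalPoints f κ ↔
      Set.MapsTo (shear f u v w) (unitalPoints f κ) (unitalPoints f κ) :=
    ⟨fun h => Set.mapsTo_iff_image_subset.mpr h.subset, fun h =>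
      (((Set.toFinite _).injOn_iff_bijOn_of_mapsTo h).mp
        (shear_injective f u v w).injOn).image_eq⟩
  rw [hmaps]
  constructor
  · intro h x
    obtain ⟨y, hy⟩ := hne x
    exact (shear_mem_unitalPoints_iff κ hcomm hy).mp (h hy)
  · rintro h ⟨x, y⟩ hxy
    exact (shear_mem_unitalPoints_iff κ hcomm hxy).mpr (h x)

theorem eq_of_forall_apply_add_apply_involution (B : G →+ G →+ G)
    (hB : ∀ w, w ≠ 0 → Injective (B w)) {κ : G →+ G} (hκ : ∀ x, κ (κ x) = x)
    (hid : ∃ x, κ x ≠ x) (hneg : ∃ x, κ x ≠ -x) {w m : G}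
    (h : ∀ x, B w x + B (κ w) (κ x) = B m (x + κ x)) : w = m := by
  -- Comparing `h x` with `h (κ x)` gives `B (w - κ w) (x - κ x) = 0`, so `κ w = w`; then
  -- `B (w - m) (x + κ x) = 0`.
  have eq_zero : ∀ {a x}, a ≠ 0 → B a x = 0 → x = 0 := fun ha hax =>
    hB _ ha (hax.trans (map_zero _).symm)
  have hw : κ w = w := by
    obtain ⟨x, hx⟩ := hid
    by_contra hw
    have hsym := h (κ x)
    rw [hκ, add_comm (κ x), ← h x, ← sub_eq_zero] at hsym
    have : B (w - κ w) (x - κ x) = 0 := by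
      rw [← neg_eq_zero, ← hsym]
      simp only [map_sub, AddMonoidHom.sub_apply]
      abel
    exact hx (sub_eq_zero.mp (eq_zero (sub_ne_zero.mpr (Ne.symm hw)) this)).symm
  by_contra hwm
  obtain ⟨x, hx⟩ := hneg
  have : B (w - m) (x + κ x) = 0 := by
    have hx' := h x
    rw [hw, ← map_add] at hx'
    rw [map_sub, AddMonoidHom.sub_apply, hx', sub_self]
  exact hx (eq_neg_of_add_eq_zero_right (eq_zero (sub_ne_zero.mpr hwm) this))

theorem forall_unital_condition_iff
    (hf : ∀ x x' y, polar f (x + x') y = polar f x y + polar f x' y) (hf0 : f 0 = 0)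
    (hnd : ∀ w, w ≠ 0 → Injective (polar f w)) {κ : G →+ G}
    (hκ : ∀ x, κ (κ x) = x) (hid : ∃ x, κ x ≠ x) (hneg : ∃ x, κ x ≠ -x) {u v w : G} :
    (∀ x, polar f w x + polar f (κ w) (κ x) - (v + κ v)
        = f (u + κ u) + polar f (u + κ u) (x + κ x)) ↔
      w = u + κ u ∧ f (u + κ u) = -(v + κ v) := by
  have hm : κ (u + κ u) = u + κ u := by rw [map_add, hκ, add_comm]
  have polar_add_right : ∀ a x y, polar f a (x + y) = polar f a x + polar f a y :=
    fun a => map_add (polarAddHom f hf a)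
  constructor
  · intro h
    have hfv : f (u + κ u) = -(v + κ v) := by simpa [polar, hf0] using (h 0).symm
    refine ⟨eq_of_forall_apply_add_apply_involution (polarAddHom f hf) hnd hκ hid hneg
      fun x => ?_, hfv⟩
    have hx := h x
    rwa [hfv, neg_add_eq_sub, sub_left_inj] at hx
  · rintro ⟨rfl, hfv⟩ x
    rw [hm, hfv, polar_add_right]
    abel

theorem exists_apply_ne_self {K : Type*} [Field K] {κ : K →+ K} {q : ℕ} (hq : q ≠ 1)
    (h2 : (2 : K) ≠ 0) (h : {y | y + κ y = 0}.ncard = q) : ∃ x, κ x ≠ x := by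
  by_contra! hκ
  have : {y | y + κ y = 0} = {0} := by
    ext y
    simp [hκ, ← two_mul, h2]
  rw [this, Set.ncard_singleton] at h
  exact hq h.symm

theorem exists_apply_ne_neg [Fintype G] {κ : G →+ G} {q : ℕ} (hq : q < Fintype.card G)
    (h : {y | y + κ y = 0}.ncard = q) : ∃ x, κ x ≠ -x := by
  by_contra! hκ
  have : {y | y + κ y = 0} = Set.univ := by
    ext y
    simp [hκ]
  rw [this, Set.ncard_univ, Nat.card_eq_fintype_card] at h
  exact hq.ne h.symm

open scoped Pointwise in
theorem ncard_setOf_eq_neg_add_apply (κ : G →+ G) (c : G) :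
    {v | c = -(v + κ v)}.ncard = {y | y + κ y = c}.ncard := by
  have : {v | c = -(v + κ v)} = -{y | y + κ y = c} := by
    ext v
    simp only [Set.mem_ofPred_eq, Set.mem_neg, map_neg]
    rw [eq_comm, neg_add]
  rw [this, Set.ncard_neg]

end Unital

/-- proof of Theorem 4.4.  Let `f` be a planar Dembowski–Ostrom
polynomial on `K = F_{q²}`, `x*y = (f(x+y) − f(x) − f(y))/2`,
`ς_{u,v,w}(x,y) = (x+u, y + 2(w*x) − v)`, `θ ≠ 0`, and `κ` as in the unitary
polarity (additive, involutory, commuting with `f`, `q` solutions `y` of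
`y + κ(y) = f(x + κ(x))` for each `x`).  With `A_θ = {(x,tθ) : x ∈ K, t ∈ F}` and
`U = {(x,y) : y + κ(y) = f(x + κ(x))}`:
(i) `ς_{u,v,w}` maps `A_θ` onto itself iff `w = 0` and `v ∈ θF`; those `q³` maps
form an abelian group under composition;
(ii) `ς_{u,v,w}` maps `U` onto itself iff `w = u + κ(u)` and
`f(u + κ(u)) = −(v + κ(v))`; there are exactly `q³` such maps. -/
theorem stmt19 (p n q : ℕ) (hp : Nat.Prime p) (hpodd : Odd p) (hn : 0 < n) (hq : q = p ^ n)
    (K : Type) [Field K] [Fintype K] (hchar : CharP K p)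
    (hcard : Fintype.card K = q ^ 2)
    (f : K → K)
    (hplanar : ∀ a : K, a ≠ 0 → Function.Bijective (fun x : K => f (x + a) - f x))
    (hDO : ∃ (s : Finset (ℕ × ℕ)) (coef : ℕ × ℕ → K),
      ∀ x : K, f x = ∑ ij ∈ s, coef ij * x ^ (p ^ ij.1 + p ^ ij.2))
    (star : K → K → K)
    (hstar : ∀ x y : K, star x y = (f (x + y) - f x - f y) / 2)
    (ς : K → K → K → (K × K) → (K × K))
    (hς : ∀ u v w x y : K, ς u v w (x, y) = (x + u, y + 2 * star w x - v))
    (θ : K) (hθ : θ ≠ 0)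
    (κ : K → K)
    (hadd : ∀ x y : K, κ (x + y) = κ x + κ y)
    (hinv : ∀ x : K, κ (κ x) = x)
    (hcomm : ∀ x : K, κ (f x) = f (κ x))
    (hcount : ∀ x : K, {y : K | y + κ y = f (x + κ x)}.ncard = q) :
    (∀ u v w : K,
      ς u v w '' {P : K × K | ∃ x t : K, t ^ q = t ∧ P = (x, t * θ)}
          = {P : K × K | ∃ x t : K, t ^ q = t ∧ P = (x, t * θ)} ↔
        (w = 0 ∧ v ∈ scalarSet K q θ)) ∧
    {g : (K × K) → (K × K) | ∃ u v : K, v ∈ scalarSet K q θ ∧ g = ς u v 0}.ncard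
      = q ^ 3 ∧
    (∀ u v u' v' : K, v ∈ scalarSet K q θ → v' ∈ scalarSet K q θ →
      ς u v 0 ∘ ς u' v' 0 = ς u' v' 0 ∘ ς u v 0) ∧
    (∀ u v u' v' : K, v ∈ scalarSet K q θ → v' ∈ scalarSet K q θ →
      ∃ u'' v'' : K, v'' ∈ scalarSet K q θ ∧ ς u v 0 ∘ ς u' v' 0 = ς u'' v'' 0) ∧
    (∀ u v w : K,
      ς u v w '' {P : K × K | P.2 + κ P.2 = f (P.1 + κ P.1)}
          = {P : K × K | P.2 + κ P.2 = f (P.1 + κ P.1)} ↔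
        (w = u + κ u ∧ f (u + κ u) = -(v + κ v))) ∧
    {g : (K × K) → (K × K) |
      ∃ u v : K, f (u + κ u) = -(v + κ v) ∧ g = ς u v (u + κ u)}.ncard = q ^ 3 := by
  have : Fact p.Prime := ⟨hp⟩
  subst hq
  have hq1 : 1 < p ^ n := Nat.one_lt_pow hn.ne' hp.one_lt
  have h2 : (2 : K) ≠ 0 := Ring.two_ne_zero <| by
    rw [ringChar.eq K p]; rintro rfl; exact Nat.not_odd_iff_even.mpr even_two hpodd
  obtain ⟨s, c, hf⟩ := hDO
  have hf0 := map_zero_of_dembowskiOstrom hf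
  obtain rfl : star = fun x y => polar f x y / 2 := funext₂ hstar
  obtain rfl : ς = shear f := by
    funext u v w ⟨x, y⟩
    rw [hς, mul_div_cancel₀ _ h2]
    rfl
  obtain ⟨κ, rfl⟩ : ∃ κ' : K →+ K, ⇑κ' = κ := ⟨AddMonoidHom.mk' κ hadd, rfl⟩
  have hS := coe_scalarAddSubgroup K p n θ
  have h0 : {y | y + κ y = 0}.ncard = p ^ n := by simpa [hf0] using hcount 0
  refine ⟨fun u v w => ?_, ?_, fun u v u' v' _ _ => ?_, fun u v u' v' hv hv' => ?_,
    fun u v w => ?_, ?_⟩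
  · rw [setOf_exists_eq_mk_mul, shear_image_setOf_snd_mem_eq_iff,
      forall_polar_sub_mem_iff hf0 hplanar (scalarAddSubgroup_ne_top hn.ne' hcard hθ), ← hS,
      SetLike.mem_coe]
  · exact (ncard_setOf_shear (fun _ => 0) _ fun _ => ncard_scalarSet hn.ne' hcard hθ).trans
      (by rw [hcard]; ring)
  · rw [shear_zero_comp_shear_zero hf0, shear_zero_comp_shear_zero hf0, add_comm u, add_comm v]
  · rw [← hS] at hv hv' ⊢
    exact ⟨u + u', v + v', add_mem hv hv', shear_zero_comp_shear_zero hf0 u v u' v'⟩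
  · have hid := exists_apply_ne_self hq1.ne' h2 h0
    have hneg := exists_apply_ne_neg (hcard ▸ lt_self_pow₀ hq1 one_lt_two) h0
    exact (shear_image_unitalPoints_eq_iff κ hcomm
      fun x => Set.nonempty_of_ncard_ne_zero (by rw [hcount x]; omega)).trans
      (forall_unital_condition_iff (polar_add_left_of_dembowskiOstrom hf) hf0
        (fun w hw => (bijective_polar hplanar hw).injective) hinv hid hneg)
  · exact (ncard_setOf_shear (fun u => u + κ u) (fun u v => f (u + κ u) = -(v + κ v))
      fun u => (ncard_setOf_eq_neg_add_apply κ _).trans (hcount u)).trans (by rw [hcard]; ring)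
end
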